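/- arXiv:1411.0434 — 7 statements merged into one kernel-verified Lean document; each statement's English description precedes it below -/
import Mathlib

section
/- Let I = [a,b] be a compact interval and K : I → ℂ be differentiable such that the image K'(I) is contained in a single quadrant of ℂ (i.e., there exist signs c, d ∈ {1,-1} with c·Re(K'(y)) ≥ 0 and d·Im(K'(y)) ≥ 0 for all y ∈ I). If u > 0, v > 0, |K(y)| ≤ v for all y ∈ I, and |K'(y)| ≥ u for all y ∈ I, then b - a ≤ 2√2·v/u. -/
open Complex Set

lemma aux_abs_bound (z : ℂ) : |z.re| + |z.im| ≤ Real.sqrt 2 * ‖z‖ := by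
  have h : ‖z‖ = Real.sqrt (z.re ^ 2 + z.im ^ 2) := by
    rw [Complex.norm_def, Complex.normSq_apply]; ring_nf
  rw [h, ← Real.sqrt_mul_self (by positivity : (0:ℝ) ≤ |z.re| + |z.im|),
    ← Real.sqrt_mul (by norm_num)]
  apply Real.sqrt_le_sqrt
  have h1 : (|z.re| - |z.im|) ^ 2 ≥ 0 := sq_nonneg _
  have h2 : |z.re| ^ 2 = z.re ^ 2 := sq_abs _
  have h3 : |z.im| ^ 2 = z.im ^ 2 := sq_abs _
  nlinarith

/-- If `K : [a,b] → ℂ` is differentiable, the image of the derivative lies in a single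
closed quadrant of `ℂ`, `|K| ≤ v` and `|K'| ≥ u` on `[a,b]`, then `b - a ≤ 2√2 v / u`. -/
theorem stmt0 (a b : ℝ) (hab : a ≤ b) (K K' : ℝ → ℂ)
    (hderiv : ∀ y ∈ Icc a b, HasDerivAt K (K' y) y)
    (hquad : ∃ c d : ℝ, (c = 1 ∨ c = -1) ∧ (d = 1 ∨ d = -1) ∧
      ∀ y ∈ Icc a b, 0 ≤ c * (K' y).re ∧ 0 ≤ d * (K' y).im)
    (u v : ℝ) (hu : 0 < u) (hv : 0 < v)
    (hKv : ∀ y ∈ Icc a b, ‖K y‖ ≤ v)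
    (hKu : ∀ y ∈ Icc a b, u ≤ ‖K' y‖) :
    b - a ≤ 2 * Real.sqrt 2 * v / u := by
  obtain ⟨c, d, hc, hd, hcd⟩ := hquad
  set f : ℝ → ℝ := fun y => c * (K y).re + d * (K y).im with hf
  set f' : ℝ → ℝ := fun y => c * (K' y).re + d * (K' y).im with hf'
  have hfd : ∀ y ∈ Icc a b, HasDerivAt f (f' y) y := by
    intro y hy
    have hre : HasDerivAt (fun y => (K y).re) (K' y).re y :=
      Complex.reCLM.hasFDerivAt.comp_hasDerivAt y (hderiv y hy)
    have him : HasDerivAt (fun y => (K y).im) (K' y).im y :=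
      Complex.imCLM.hasFDerivAt.comp_hasDerivAt y (hderiv y hy)
    exact (hre.const_mul c).add (him.const_mul d)
  -- derivative lower bound
  have hflb : ∀ y ∈ Icc a b, u ≤ f' y := by
    intro y hy
    obtain ⟨h1, h2⟩ := hcd y hy
    have habs : ‖K' y‖ ≤ f' y := by
      have hsq : ‖K' y‖ = Real.sqrt ((K' y).re ^ 2 + (K' y).im ^ 2) := by
        rw [Complex.norm_def, Complex.normSq_apply]; ring_nf
      rw [hsq]
      have hc2 : c ^ 2 = 1 := by rcases hc with h | h <;> rw [h] <;> norm_num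
      have hd2 : d ^ 2 = 1 := by rcases hd with h | h <;> rw [h] <;> norm_num
      have : Real.sqrt ((K' y).re ^ 2 + (K' y).im ^ 2) ≤
          Real.sqrt ((c * (K' y).re + d * (K' y).im) ^ 2) := by
        apply Real.sqrt_le_sqrt
        nlinarith [mul_nonneg h1 h2]
      calc Real.sqrt ((K' y).re ^ 2 + (K' y).im ^ 2) ≤
          Real.sqrt ((c * (K' y).re + d * (K' y).im) ^ 2) := this
        _ = |c * (K' y).re + d * (K' y).im| := Real.sqrt_sq_eq_abs _
        _ = f' y := abs_of_nonneg (by positivity)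
    exact (hKu y hy).trans habs
  -- value bound
  have hfub : ∀ y ∈ Icc a b, |f y| ≤ Real.sqrt 2 * v := by
    intro y hy
    have hc1 : |c| = 1 := by rcases hc with h | h <;> rw [h] <;> norm_num
    have hd1 : |d| = 1 := by rcases hd with h | h <;> rw [h] <;> norm_num
    calc |f y| ≤ |c * (K y).re| + |d * (K y).im| := abs_add_le _ _
      _ = |(K y).re| + |(K y).im| := by rw [abs_mul, abs_mul, hc1, hd1, one_mul, one_mul]
      _ ≤ Real.sqrt 2 * ‖K y‖ := aux_abs_bound _
      _ ≤ Real.sqrt 2 * v := by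
          have : (0:ℝ) ≤ Real.sqrt 2 := Real.sqrt_nonneg 2
          exact mul_le_mul_of_nonneg_left (hKv y hy) this
  -- mean value
  have hcont : ContinuousOn f (Icc a b) := fun y hy =>
    (hfd y hy).continuousAt.continuousWithinAt
  have hdiff : DifferentiableOn ℝ f (interior (Icc a b)) := fun y hy =>
    (hfd y (interior_subset hy)).differentiableAt.differentiableWithinAt
  have hderge : ∀ y ∈ interior (Icc a b), u ≤ deriv f y := by
    intro y hy
    rw [(hfd y (interior_subset hy)).deriv]
    exact hflb y (interior_subset hy)
  have key := (convex_Icc a b).mul_sub_le_image_sub_of_le_deriv hcont hdiff hderge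
    a (left_mem_Icc.2 hab) b (right_mem_Icc.2 hab) hab
  have hfa := hfub a (left_mem_Icc.2 hab)
  have hfb := hfub b (right_mem_Icc.2 hab)
  have h1 : u * (b - a) ≤ 2 * Real.sqrt 2 * v := by
    have := abs_sub_abs_le_abs_sub (f b) (f a)
    have hsub : f b - f a ≤ |f b| + |f a| := by
      calc f b - f a ≤ |f b - f a| := le_abs_self _
        _ ≤ |f b| + |f a| := abs_sub _ _
    nlinarith
  rw [le_div_iff₀ hu]
  linarith [h1]
end

section
/- Let r = (r_1, ..., r_d) ∈ ℝ^d have components that are linearly independent over ℚ, and let Ψ_r : ℝ → 𝕋^d be the homomorphism Ψ_r(y) = (y·r_1, ..., y·r_d) mod ℤ^d. Then the image of Ψ_r is dense in 𝕋^d, and for every continuous function S : 𝕋^d → ℂ, lim_{L→∞} (1/(2L)) ∫_{-L}^{L} S(Ψ_r(y)) dy = ∫_{𝕋^d} S(g) dg, where dg is normalized Haar measure. -/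
open MeasureTheory Filter

namespace BSW

theorem factZeroLtOne : Fact ((0:ℝ) < 1) := ⟨one_pos⟩

attribute [local instance] factZeroLtOne

noncomputable def chr {d : ℕ} (n : Fin d → ℤ) : C(Fin d → AddCircle (1:ℝ), ℂ) :=
  ∏ i, (fourier (n i)).comp ⟨fun g => g i, continuous_apply i⟩

lemma chr_apply {d : ℕ} (n : Fin d → ℤ) (g : Fin d → AddCircle (1:ℝ)) :
    chr n g = ∏ i, fourier (n i) (g i) := by simp [chr]

instance : IsProbabilityMeasure (volume : Measure (AddCircle (1:ℝ))) :=
  ⟨by rw [AddCircle.measure_univ]; norm_num⟩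

lemma integral_fourier (n : ℤ) :
    ∫ x : AddCircle (1:ℝ), fourier n x = if n = 0 then 1 else 0 := by
  split_ifs with h
  · simp [h, fourier_zero]
  · exact MeasureTheory.integral_eq_zero_of_add_right_eq_neg
      (fourier_add_half_inv_index h one_pos)

lemma integral_chr {d : ℕ} (n : Fin d → ℤ) :
    ∫ g : Fin d → AddCircle (1:ℝ), chr n g = if n = 0 then 1 else 0 := by
  have : ∫ g : Fin d → AddCircle (1:ℝ), chr n g
      = ∏ i, ∫ x : AddCircle (1:ℝ), fourier (n i) x := by
    rw [← MeasureTheory.integral_fintype_prod_eq_prod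
      (fun i x => (fourier (n i) x : ℂ))]
    simp_rw [chr_apply]
    rfl
  rw [this]
  simp_rw [integral_fourier]
  by_cases h : n = 0
  · simp [h]
  · rw [if_neg h]
    obtain ⟨i, hi⟩ := Function.ne_iff.mp h
    exact Finset.prod_eq_zero (Finset.mem_univ i) (by simpa using hi)

lemma chr_mul {d : ℕ} (n m : Fin d → ℤ) : chr n * chr m = chr (n + m) := by
  ext g
  simp only [ContinuousMap.mul_apply, chr_apply, ← Finset.prod_mul_distrib]
  refine Finset.prod_congr rfl fun i _ => ?_
  rw [Pi.add_apply, fourier_add]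

lemma chr_star {d : ℕ} (n : Fin d → ℤ) : star (chr n) = chr (-n) := by
  ext g
  simp only [ContinuousMap.star_apply, chr_apply, Pi.neg_apply, star_prod]
  exact Finset.prod_congr rfl fun i _ => (fourier_neg).symm

lemma chr_zero {d : ℕ} : chr (0 : Fin d → ℤ) = 1 := by
  ext g; simp [chr_apply, fourier_zero]

noncomputable def chrAlg (d : ℕ) : StarSubalgebra ℂ C(Fin d → AddCircle (1:ℝ), ℂ) where
  toSubalgebra := { Submodule.span ℂ (Set.range (chr (d := d))) with
    mul_mem' := by
      intro a b ha hb
      refine Submodule.span_induction₂ (p := fun a b _ _ => a * b ∈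
        Submodule.span ℂ (Set.range (chr (d := d)))) ?_ ?_ ?_ ?_ ?_ ?_ ?_ ha hb
      · rintro _ _ ⟨n, rfl⟩ ⟨m, rfl⟩
        rw [chr_mul]; exact Submodule.subset_span ⟨n + m, rfl⟩
      · intro x _; simp
      · intro x _; simp
      · intro x y z _ _ _ hxz hyz; rw [add_mul]; exact add_mem hxz hyz
      · intro x y z _ _ _ hxy hxz; rw [mul_add]; exact add_mem hxy hxz
      · intro c x y _ _ h; rw [smul_mul_assoc]; exact Submodule.smul_mem _ c h
      · intro c x y _ _ h; rw [mul_smul_comm]; exact Submodule.smul_mem _ c h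
    one_mem' := by rw [← chr_zero]; exact Submodule.subset_span ⟨0, rfl⟩
    algebraMap_mem' := by
      intro c
      have : (algebraMap ℂ C(Fin d → AddCircle (1:ℝ), ℂ)) c = c • 1 := by
        simp [Algebra.algebraMap_eq_smul_one]
      rw [this]
      have h1 : (1 : C(Fin d → AddCircle (1:ℝ), ℂ)) ∈
          Submodule.span ℂ (Set.range (chr (d := d))) := by
        rw [← chr_zero]; exact Submodule.subset_span ⟨0, rfl⟩
      exact Submodule.smul_mem _ c h1 }
  star_mem' := by
    intro a ha
    refine Submodule.span_induction (p := fun a _ => star a ∈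
      Submodule.span ℂ (Set.range (chr (d := d)))) ?_ ?_ ?_ ?_ ha
    · rintro _ ⟨n, rfl⟩; rw [chr_star]; exact Submodule.subset_span ⟨-n, rfl⟩
    · simp
    · intro x y _ _ hx hy; rw [star_add]; exact add_mem hx hy
    · intro c x _ hx; rw [star_smul]; exact Submodule.smul_mem _ _ hx

lemma chrAlg_separatesPoints (d : ℕ) : (chrAlg d).SeparatesPoints := by
  intro g g' hgg'
  obtain ⟨i, hi⟩ := Function.ne_iff.mp hgg'
  refine ⟨_, ⟨chr (Pi.single i 1), Submodule.subset_span ⟨Pi.single i 1, rfl⟩, rfl⟩, ?_⟩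
  have key : ∀ h : Fin d → AddCircle (1:ℝ), chr (Pi.single i 1) h = fourier 1 (h i) := by
    intro h
    rw [chr_apply,
      show (fourier 1 (h i) : ℂ) = fourier ((Pi.single i (1:ℤ) : Fin d → ℤ) i) (h i) by
        rw [Pi.single_eq_same]]
    exact Finset.prod_eq_single i
      (fun j _ hj => by rw [Pi.single_eq_of_ne hj, fourier_zero])
      (fun hh => absurd (Finset.mem_univ i) hh)
  show chr (Pi.single i 1) g ≠ chr (Pi.single i 1) g'
  rw [key, key, fourier_one, fourier_one]
  contrapose! hi
  rw [Circle.coe_inj] at hi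
  exact AddCircle.injective_toCircle one_ne_zero hi

lemma chrAlg_closure_eq_top (d : ℕ) : (chrAlg d).topologicalClosure = ⊤ :=
  ContinuousMap.starSubalgebra_topologicalClosure_eq_top_of_separatesPoints _
    (chrAlg_separatesPoints d)

noncomputable def psi {d : ℕ} (r : Fin d → ℝ) (y : ℝ) : Fin d → AddCircle (1:ℝ) :=
  fun i => ((y * r i : ℝ) : AddCircle (1:ℝ))

lemma continuous_psi {d : ℕ} (r : Fin d → ℝ) : Continuous (psi r) :=
  continuous_pi fun i =>
    (AddCircle.continuous_mk' (1:ℝ)).comp (continuous_id.mul continuous_const)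

open Real in
lemma chr_psi {d : ℕ} (n : Fin d → ℤ) (r : Fin d → ℝ) (y : ℝ) :
    chr n (psi r y)
      = Complex.exp (Complex.I * ((2 * π * (∑ i, (n i : ℝ) * r i) : ℝ) : ℂ) * y) := by
  rw [chr_apply]
  simp_rw [psi, fourier_coe_apply]
  rw [← Complex.exp_sum]
  congr 1
  push_cast
  simp only [Finset.mul_sum, Finset.sum_mul]
  exact Finset.sum_congr rfl fun i _ => by ring

lemma theta_ne_zero {d : ℕ} {r : Fin d → ℝ} (hind : LinearIndependent ℚ r)
    {n : Fin d → ℤ} (hn : n ≠ 0) : (∑ i, (n i : ℝ) * r i) ≠ 0 := by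
  intro h0
  apply hn
  funext i
  have := Fintype.linearIndependent_iff.mp hind (fun i => (n i : ℚ)) ?_ i
  · exact_mod_cast this
  · rw [← h0]
    refine Finset.sum_congr rfl fun j _ => ?_
    rw [Rat.smul_def]; push_cast; ring

lemma tendsto_exp_avg (θ : ℝ) (hθ : θ ≠ 0) :
    Filter.Tendsto (fun L : ℝ => (1 / (2 * L)) •
      ∫ y in (-L)..L, Complex.exp ((Complex.I * ((2 * Real.pi * θ : ℝ) : ℂ)) * y))
      atTop (nhds 0) := by
  set c : ℂ := Complex.I * ((2 * Real.pi * θ : ℝ) : ℂ) with hc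
  have h2πθ : (2 * Real.pi * θ) ≠ 0 :=
    mul_ne_zero (mul_ne_zero two_ne_zero Real.pi_ne_zero) hθ
  have hc0 : c ≠ 0 := mul_ne_zero Complex.I_ne_zero (Complex.ofReal_ne_zero.mpr h2πθ)
  have habs : ∀ t : ℝ, ‖Complex.exp (c * t)‖ = 1 := by
    intro t
    rw [Complex.norm_exp]
    have : (c * t).re = 0 := by simp [hc, Complex.mul_re]
    rw [this, Real.exp_zero]
  have hbound : ∀ᶠ L : ℝ in atTop,
      ‖(1 / (2 * L)) • ∫ y in (-L)..L, Complex.exp (c * y)‖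
        ≤ (2 / ‖c‖) * (1 / (2 * L)) := by
    filter_upwards [eventually_gt_atTop 0] with L hL
    rw [integral_exp_mul_complex hc0, norm_smul]
    have h1 : ‖(1 / (2 * L) : ℝ)‖ = 1 / (2 * L) := by
      rw [Real.norm_eq_abs, abs_of_pos (by positivity)]
    rw [h1, mul_comm]
    gcongr
    rw [div_eq_mul_inv, norm_mul, norm_inv,
      div_eq_mul_inv]
    gcongr
    calc ‖Complex.exp (c * L) - Complex.exp (c * (-L : ℝ))‖
        ≤ ‖Complex.exp (c * L)‖ + ‖Complex.exp (c * (-L : ℝ))‖ :=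
          norm_sub_le _ _
      _ = 2 := by rw [habs, habs]; norm_num
  have h2 : Filter.Tendsto (fun L : ℝ => 2 * L) atTop atTop :=
    tendsto_id.const_mul_atTop (two_pos : (0:ℝ) < 2)
  have hg0 : Filter.Tendsto (fun L : ℝ => (2 * L)⁻¹) atTop (nhds (0:ℝ)) :=
    tendsto_inv_atTop_zero.comp h2
  have hg : Filter.Tendsto (fun L : ℝ => (2 / ‖c‖) * (1 / (2 * L)))
      atTop (nhds 0) := by
    simp_rw [one_div]
    simpa using hg0.const_mul (2 / ‖c‖)
  exact squeeze_zero_norm' hbound hg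

/-- The time averages of a character converge to its space average. -/
lemma chr_mem_V {d : ℕ} {r : Fin d → ℝ} (hind : LinearIndependent ℚ r) (n : Fin d → ℤ) :
    Filter.Tendsto (fun L : ℝ => (1 / (2 * L)) • ∫ y in (-L)..L, chr n (psi r y))
      atTop (nhds (∫ g, chr n g)) := by
  rw [integral_chr]
  by_cases h : n = 0
  · rw [if_pos h, h]
    have heq : (fun L : ℝ =>
        (1 / (2 * L)) • (∫ y in (-L)..L, chr (0 : Fin d → ℤ) (psi r y)))
        =ᶠ[atTop] fun _ => (1:ℂ) := by
      filter_upwards [eventually_gt_atTop 0] with L hL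
      have : ∀ y : ℝ, chr (0 : Fin d → ℤ) (psi r y) = 1 := by
        intro y; rw [chr_zero]; rfl
      simp_rw [this, intervalIntegral.integral_const, smul_smul]
      rw [show (1 / (2 * L)) * (L - -L) = 1 by field_simp; ring, one_smul]
    exact Tendsto.congr' heq.symm tendsto_const_nhds
  · rw [if_neg h]
    have hθ := theta_ne_zero hind h
    have := tendsto_exp_avg _ hθ
    refine Tendsto.congr (fun L => ?_) this
    congr 1
    refine intervalIntegral.integral_congr fun y _ => ?_
    rw [chr_psi]

/-- The set of continuous functions whose time averages converge to the space average. -/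
noncomputable def V {d : ℕ} (r : Fin d → ℝ) :
    Submodule ℂ C(Fin d → AddCircle (1:ℝ), ℂ) where
  carrier := {S | Filter.Tendsto
    (fun L : ℝ => (1 / (2 * L)) • ∫ y in (-L)..L, S (psi r y))
    atTop (nhds (∫ g, S g))}
  add_mem' := by
    intro a b ha hb
    have hInt : ∀ S : C(Fin d → AddCircle (1:ℝ), ℂ), Integrable S volume := fun S =>
      S.continuous.integrable_of_hasCompactSupport (HasCompactSupport.of_compactSpace _)
    have hIv : ∀ (S : C(Fin d → AddCircle (1:ℝ), ℂ)) (L : ℝ),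
        IntervalIntegrable (fun y => S (psi r y)) volume (-L) L := fun S L =>
      (S.continuous.comp (continuous_psi r)).intervalIntegrable _ _
    have key : ∀ L : ℝ, (1 / (2 * L)) • ∫ y in (-L)..L, (a + b) (psi r y)
        = ((1 / (2 * L)) • ∫ y in (-L)..L, a (psi r y))
          + ((1 / (2 * L)) • ∫ y in (-L)..L, b (psi r y)) := by
      intro L
      have : ∀ y : ℝ, (a + b) (psi r y) = a (psi r y) + b (psi r y) := fun y => rfl
      simp_rw [this]
      rw [intervalIntegral.integral_add (hIv a L) (hIv b L), smul_add]
    have hint : ∫ g, (a + b) g = (∫ g, a g) + ∫ g, b g := by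
      have : ∀ g, (a + b) g = a g + b g := fun g => rfl
      simp_rw [this]
      exact integral_add (hInt a) (hInt b)
    rw [Set.mem_setOf_eq, hint]
    exact Tendsto.congr (fun L => (key L).symm) (ha.add hb)
  zero_mem' := by
    have : ∀ y : ℝ, (0 : C(Fin d → AddCircle (1:ℝ), ℂ)) (psi r y) = 0 := fun _ => rfl
    simp_rw [Set.mem_setOf_eq, this, intervalIntegral.integral_zero, smul_zero]
    have : ∀ g : Fin d → AddCircle (1:ℝ), (0 : C(Fin d → AddCircle (1:ℝ), ℂ)) g = 0 :=
      fun _ => rfl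
    simp_rw [this, integral_zero]
    exact tendsto_const_nhds
  smul_mem' := by
    intro c a ha
    have key : ∀ L : ℝ, (1 / (2 * L)) • ∫ y in (-L)..L, (c • a) (psi r y)
        = c • ((1 / (2 * L)) • ∫ y in (-L)..L, a (psi r y)) := by
      intro L
      have : ∀ y : ℝ, (c • a) (psi r y) = c • (a (psi r y)) := fun y => rfl
      simp_rw [this]
      rw [intervalIntegral.integral_smul, smul_comm]
    have hint : ∫ g, (c • a) g = c • ∫ g, a g := by
      have : ∀ g, (c • a) g = c • (a g) := fun g => rfl
      simp_rw [this]
      exact integral_smul c _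
    rw [Set.mem_setOf_eq, hint]
    exact Tendsto.congr (fun L => (key L).symm) (ha.const_smul c)

lemma isClosed_V {d : ℕ} (r : Fin d → ℝ) :
    IsClosed ((V r : Set C(Fin d → AddCircle (1:ℝ), ℂ))) := by
  have hInt : ∀ S : C(Fin d → AddCircle (1:ℝ), ℂ), Integrable S volume := fun S =>
    S.continuous.integrable_of_hasCompactSupport (HasCompactSupport.of_compactSpace _)
  have hIv : ∀ (S : C(Fin d → AddCircle (1:ℝ), ℂ)) (L : ℝ),
      IntervalIntegrable (fun y => S (psi r y)) volume (-L) L := fun S L =>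
    (S.continuous.comp (continuous_psi r)).intervalIntegrable _ _
  refine isClosed_of_closure_subset fun S hS => ?_
  show Filter.Tendsto (fun L : ℝ => (1 / (2 * L)) • ∫ y in (-L)..L, S (psi r y))
    atTop (nhds (∫ g, S g))
  rw [Metric.tendsto_atTop]
  intro ε hε
  obtain ⟨S', hS'V, hdist⟩ := Metric.mem_closure_iff.mp hS (ε/3) (by positivity)
  have hS'T : Filter.Tendsto (fun L : ℝ => (1 / (2 * L)) • ∫ y in (-L)..L, S' (psi r y))
      atTop (nhds (∫ g, S' g)) := hS'V
  obtain ⟨N, hN⟩ := Metric.tendsto_atTop.mp hS'T (ε/3) (by positivity)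
  refine ⟨max N 1, fun L hL => ?_⟩
  have hL1 : (1:ℝ) ≤ L := le_trans (le_max_right _ _) hL
  have hLN : N ≤ L := le_trans (le_max_left _ _) hL
  have hL0 : (0:ℝ) < L := lt_of_lt_of_le one_pos hL1
  have b2 : dist ((1 / (2 * L)) • ∫ y in (-L)..L, S' (psi r y)) (∫ g, S' g) < ε/3 := hN L hLN
  have b1 : dist ((1 / (2 * L)) • ∫ y in (-L)..L, S (psi r y))
      ((1 / (2 * L)) • ∫ y in (-L)..L, S' (psi r y)) ≤ dist S S' := by
    rw [dist_eq_norm, ← smul_sub, ← intervalIntegral.integral_sub (hIv S L) (hIv S' L),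
      norm_smul]
    have h1 : ‖(1 / (2 * L) : ℝ)‖ = 1 / (2 * L) := by
      rw [Real.norm_eq_abs, abs_of_pos (by positivity)]
    rw [h1]
    have hb : ‖∫ y in (-L)..L, (S (psi r y) - S' (psi r y))‖ ≤ dist S S' * |L - -L| := by
      refine intervalIntegral.norm_integral_le_of_norm_le_const fun y _ => ?_
      have h2 := ContinuousMap.norm_coe_le_norm (S - S') (psi r y)
      simpa [dist_eq_norm] using h2
    calc (1 / (2 * L)) * ‖∫ y in (-L)..L, (S (psi r y) - S' (psi r y))‖
        ≤ (1 / (2 * L)) * (dist S S' * |L - -L|) := by gcongr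
      _ = dist S S' := by
          rw [show |L - -L| = 2 * L by rw [abs_of_pos (by linarith)]; ring]
          field_simp
  have b3 : dist (∫ g, S' g) (∫ g, S g) ≤ dist S S' := by
    rw [dist_eq_norm, ← integral_sub (hInt S') (hInt S)]
    have hc : ∀ᵐ g : Fin d → AddCircle (1:ℝ) ∂volume, ‖S' g - S g‖ ≤ dist S S' :=
      Filter.Eventually.of_forall fun g => by
        have h2 := ContinuousMap.norm_coe_le_norm (S' - S) g
        simpa [dist_eq_norm, dist_comm, norm_sub_rev] using h2
    calc ‖∫ g, (S' g - S g)‖ ≤ dist S S' * (volume (Set.univ : Set (Fin d → AddCircle (1:ℝ)))).toReal :=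
          norm_integral_le_of_norm_le_const hc
      _ = dist S S' := by rw [measure_univ]; simp
  calc dist ((1 / (2 * L)) • ∫ y in (-L)..L, S (psi r y)) (∫ g, S g)
      ≤ dist ((1 / (2 * L)) • ∫ y in (-L)..L, S (psi r y))
          ((1 / (2 * L)) • ∫ y in (-L)..L, S' (psi r y))
        + dist ((1 / (2 * L)) • ∫ y in (-L)..L, S' (psi r y)) (∫ g, S' g)
        + dist (∫ g, S' g) (∫ g, S g) := dist_triangle4 _ _ _ _
    _ < ε := by
        have := lt_of_le_of_lt b1 hdist
        have := lt_of_le_of_lt b3 hdist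
        linarith

lemma mem_V_all {d : ℕ} {r : Fin d → ℝ} (hind : LinearIndependent ℚ r)
    (S : C(Fin d → AddCircle (1:ℝ), ℂ)) : S ∈ V r := by
  have h1 : ((chrAlg d : StarSubalgebra ℂ _) : Set C(Fin d → AddCircle (1:ℝ), ℂ)) ⊆ V r := by
    have hspan : Submodule.span ℂ (Set.range (chr (d := d))) ≤ V r :=
      Submodule.span_le.mpr (by rintro _ ⟨n, rfl⟩; exact chr_mem_V hind n)
    exact fun x hx => hspan hx
  have h2 : closure ((chrAlg d : StarSubalgebra ℂ _) : Set C(Fin d → AddCircle (1:ℝ), ℂ))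
      ⊆ V r := closure_minimal h1 (isClosed_V r)
  have h3 : closure ((chrAlg d : StarSubalgebra ℂ _) : Set C(Fin d → AddCircle (1:ℝ), ℂ))
      = Set.univ := by
    have := chrAlg_closure_eq_top d
    have hcoe : ((chrAlg d).topologicalClosure : Set C(Fin d → AddCircle (1:ℝ), ℂ))
        = closure ((chrAlg d : StarSubalgebra ℂ _) : Set _) := rfl
    rw [← hcoe, this]
    rfl
  exact h2 (h3 ▸ Set.mem_univ S)

end BSW

open BSW in
/-- Bohl–Sierpinski–Weyl theorem on averages: if the components of `r ∈ ℝ^d` are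
linearly independent over `ℚ`, then the one-parameter subgroup `Ψ_r(y) = (y r_i mod ℤ)_i`
has dense image in the torus `𝕋^d` and the time averages of any continuous function along
it converge to the space average (normalized Haar measure). -/
theorem stmt4 (d : ℕ) (r : Fin d → ℝ) (hind : LinearIndependent ℚ r) :
    DenseRange (fun y : ℝ => fun i : Fin d => ((y * r i : ℝ) : AddCircle (1:ℝ))) ∧
    ∀ S : (Fin d → AddCircle (1:ℝ)) → ℂ, Continuous S →
      Tendsto (fun L : ℝ =>
          (1 / (2 * L)) • ∫ y in (-L)..L, S (fun i => ((y * r i : ℝ) : AddCircle (1:ℝ))))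
        atTop (nhds (∫ g, S g)) := by
  have part2 : ∀ S : (Fin d → AddCircle (1:ℝ)) → ℂ, Continuous S →
      Tendsto (fun L : ℝ =>
          (1 / (2 * L)) • ∫ y in (-L)..L, S (fun i => ((y * r i : ℝ) : AddCircle (1:ℝ))))
        atTop (nhds (∫ g, S g)) := fun S hS => mem_V_all hind ⟨S, hS⟩
  refine ⟨?_, part2⟩
  by_contra hd
  have hd' : ¬ ∀ x : Fin d → AddCircle (1:ℝ),
      x ∈ closure (Set.range (fun y : ℝ => fun i : Fin d =>
        ((y * r i : ℝ) : AddCircle (1:ℝ)))) := hd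
  obtain ⟨x, hx⟩ := not_forall.mp hd'
  set K := closure (Set.range (fun y : ℝ => fun i : Fin d => ((y * r i : ℝ) : AddCircle (1:ℝ))))
    with hKdef
  obtain ⟨f, hf0, hf1, hf01⟩ := exists_continuous_zero_one_of_isClosed
    (isClosed_closure (s := Set.range (fun y : ℝ => fun i : Fin d =>
      ((y * r i : ℝ) : AddCircle (1:ℝ))))) (isClosed_singleton (x := x))
    (Set.disjoint_singleton_right.mpr hx)
  set Sf : (Fin d → AddCircle (1:ℝ)) → ℂ := fun g => ((f g : ℝ) : ℂ) with hSf
  have hSfc : Continuous Sf := Complex.continuous_ofReal.comp f.continuous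
  have hzero : ∀ L : ℝ, (1 / (2 * L)) • ∫ y in (-L)..L,
      Sf (fun i => ((y * r i : ℝ) : AddCircle (1:ℝ))) = 0 := by
    intro L
    have : ∀ y : ℝ, Sf (fun i => ((y * r i : ℝ) : AddCircle (1:ℝ))) = 0 := by
      intro y
      have hmem : (fun i => ((y * r i : ℝ) : AddCircle (1:ℝ))) ∈ K :=
        subset_closure (Set.mem_range_self y)
      have := hf0 hmem
      simp only [hSf, this]
      simp [ContinuousMap.zero_apply]
    simp_rw [this, intervalIntegral.integral_zero, smul_zero]
  have huniq : (∫ g, Sf g) = 0 :=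
    tendsto_nhds_unique (part2 Sf hSfc)
      (Tendsto.congr (fun L => (hzero L).symm) tendsto_const_nhds)
  have h0 : (∫ g, f g) = (0:ℝ) := by
    have : (∫ g, Sf g) = ((∫ g, f g : ℝ) : ℂ) := integral_ofReal
    rw [this] at huniq
    exact_mod_cast huniq
  have hfint : Integrable f volume :=
    f.continuous.integrable_of_hasCompactSupport (HasCompactSupport.of_compactSpace _)
  have hf_nonneg : (0 : (Fin d → AddCircle (1:ℝ)) → ℝ) ≤ f := fun g => (hf01 g).1
  have hae : (f : (Fin d → AddCircle (1:ℝ)) → ℝ) =ᵐ[volume] 0 :=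
    (integral_eq_zero_iff_of_nonneg hf_nonneg hfint).mp h0
  have hfeq : (f : (Fin d → AddCircle (1:ℝ)) → ℝ) = 0 :=
    (Continuous.ae_eq_iff_eq volume f.continuous continuous_const).mp hae
  have : f x = 1 := hf1 rfl
  rw [show f x = (0:ℝ) from congrFun hfeq x] at this
  exact zero_ne_one this
end

section
/- Let λ be a PV number of degree n with conjugates λ_1, ..., λ_n and Vandermonde matrix V, and let σ be an admissible vector. If ℓ ∈ ℤ^n and (V^T ℓ)_1 ≠ 0 with |(V^T ℓ)_j| < σ_j for 2 ≤ j ≤ n, then |(V^T ℓ)_1| ≥ ∏_{j=2}^n σ_j^{-1}. Consequently any two distinct points of the quasilattice 𝔏(σ) are at distance at least 2^{1-n} ∏_{j=2}^n σ_j^{-1}, so 𝔏(σ) is uniformly discrete. -/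
open Polynomial
open IntermediateField

/-- `σ` is admissible. -/
def Admissible (n : ℕ) [NeZero n] (μ : Fin n → ℂ) (σ : Fin n → ℝ) : Prop :=
  σ 0 = 0 ∧ (∀ j : Fin n, j ≠ 0 → 0 < σ j) ∧
    ∀ j k : Fin n, μ j = starRingEnd ℂ (μ k) → σ j = σ k

/-- The quasilattice `𝔏(σ)`. -/
def QL (n : ℕ) [NeZero n] (μ : Fin n → ℂ) (σ : Fin n → ℝ) : Set ℝ :=
  { x : ℝ | ∃ ℓ : Fin n → ℤ,
      (x : ℂ) = ∑ i, (ℓ i : ℂ) * μ 0 ^ (i : ℕ) ∧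
      ∀ j : Fin n, j ≠ 0 → ‖∑ i, (ℓ i : ℂ) * μ j ^ (i : ℕ)‖ < σ j }

lemma key_int (lam : ℝ) (hint : IsIntegral ℤ lam)
    (n : ℕ) [NeZero n] (μ : Fin n → ℂ)
    (hroots : Polynomial.map (algebraMap ℤ ℂ) (minpoly ℤ lam) = ∏ j, (X - C (μ j)))
    (ℓ : Fin n → ℤ) :
    ∃ m : ℤ, (m : ℂ) = ∏ j, ∑ i, (ℓ i : ℂ) * μ j ^ (i : ℕ) ∧
      ((∑ i, (ℓ i : ℝ) * lam ^ (i : ℕ)) ≠ 0 → m ≠ 0) := by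
  have hintQ : IsIntegral ℚ lam := hint.tower_top
  set L := ℚ⟮lam⟯ with hL
  have hFD : FiniteDimensional ℚ L := adjoin.finiteDimensional hintQ
  set g : L := AdjoinSimple.gen ℚ lam with hg
  set x : L := ∑ i, (ℓ i : L) * g ^ (i : ℕ) with hx
  -- image of x in ℝ
  have hxR : (algebraMap L ℝ) x = ∑ i, (ℓ i : ℝ) * lam ^ (i : ℕ) := by
    rw [hx, map_sum]
    refine Finset.sum_congr rfl fun i _ => ?_
    push_cast
    rfl
  -- x is integral over ℤ
  have hgint : IsIntegral ℤ g := by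
    rwa [← isIntegral_algebraMap_iff (algebraMap L ℝ).injective]
  have hxint : IsIntegral ℤ x := by
    refine IsIntegral.sum _ fun i _ => ?_
    have h1 : IsIntegral ℤ ((algebraMap ℤ L) (ℓ i)) := isIntegral_algebraMap
    simpa using h1.mul (hgint.pow (i : ℕ))
  -- the norm is an integer
  have hnormint : IsIntegral ℤ (Algebra.norm ℚ x) := Algebra.isIntegral_norm ℚ hxint
  obtain ⟨m, hm⟩ := IsIntegrallyClosed.isIntegral_iff.mp hnormint
  refine ⟨m, ?_, ?_⟩
  · -- norm = product over embeddings
    have h1 : algebraMap ℚ ℂ (Algebra.norm ℚ x) = ∏ σ : L →ₐ[ℚ] ℂ, σ x :=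
      Algebra.norm_eq_prod_embeddings ℚ ℂ x
    -- aroots of minpoly ℚ lam in ℂ
    have hmin : minpoly ℚ lam = Polynomial.map (algebraMap ℤ ℚ) (minpoly ℤ lam) :=
      minpoly.isIntegrallyClosed_eq_field_fractions' ℚ hint
    have haroots : (minpoly ℚ lam).aroots ℂ = Multiset.map μ Finset.univ.val := by
      rw [aroots_def, hmin, Polynomial.map_map, ← IsScalarTower.algebraMap_eq, hroots]
      have : (∏ j, (X - C (μ j))) = ((Multiset.map μ Finset.univ.val).map
          (fun a => X - C a)).prod := by
        rw [Multiset.map_map]; rfl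
      rw [this, roots_multiset_prod_X_sub_C]
    have hnodup : (Multiset.map μ Finset.univ.val).Nodup := by
      rw [← haroots]
      exact nodup_roots ((minpoly.irreducible hintQ).separable.map)
    have hμinj : Function.Injective μ := fun a b hab =>
      Multiset.inj_on_of_nodup_map hnodup a (Finset.mem_val.mpr (Finset.mem_univ a)) b (Finset.mem_val.mpr (Finset.mem_univ b)) hab
    set F : ℂ → ℂ := fun z => ∑ i, (ℓ i : ℂ) * z ^ (i : ℕ) with hF
    have hσx : ∀ σ : L →ₐ[ℚ] ℂ, σ x = F (σ g) := by
      intro σ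
      rw [hx, map_sum, hF]
      refine Finset.sum_congr rfl fun i _ => ?_
      rw [map_mul, map_pow, map_intCast]
    set e := algHomAdjoinIntegralEquiv ℚ (K := ℂ) hintQ with he
    haveI : Fintype { y // y ∈ (minpoly ℚ lam).aroots ℂ } := Fintype.ofEquiv _ e
    have h2 : ∏ σ : L →ₐ[ℚ] ℂ, σ x = ∏ r : { y // y ∈ (minpoly ℚ lam).aroots ℂ }, F r.val := by
      refine (Fintype.prod_equiv e.symm (fun r => F r.val) (fun σ => σ x) fun r => ?_).symm
      exact ((hσx (e.symm r)).trans (congrArg F (algHomAdjoinIntegralEquiv_symm_apply_gen ℚ hintQ r))).symm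
    set S : Finset ℂ := ⟨Multiset.map μ Finset.univ.val, hnodup⟩ with hS
    have h3 : ∏ r : { y // y ∈ (minpoly ℚ lam).aroots ℂ }, F r.val
        = ∏ z ∈ S, F z := by
      rw [← Finset.prod_coe_sort S F]
      exact Fintype.prod_equiv
        (Equiv.subtypeEquivRight (fun y => by rw [haroots]; exact Iff.rfl)) _ _ (fun r => rfl)
    have h4 : S = Finset.map ⟨μ, hμinj⟩ Finset.univ := rfl
    calc (m : ℂ) = algebraMap ℚ ℂ (algebraMap ℤ ℚ m) := by simp
      _ = ∏ σ : L →ₐ[ℚ] ℂ, σ x := by rw [hm, h1]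
      _ = ∏ z ∈ S, F z := by rw [h2, h3]
      _ = ∏ j, F (μ j) := by rw [h4, Finset.prod_map]; rfl
      _ = ∏ j, ∑ i, (ℓ i : ℂ) * μ j ^ (i : ℕ) := rfl
  · intro hne hm0
    have hx0 : x ≠ 0 := by
      intro h0
      rw [h0, map_zero] at hxR
      exact hne hxR.symm
    have : Algebra.norm ℚ x ≠ 0 := Algebra.norm_ne_zero_iff.mpr hx0
    rw [← hm, hm0] at this
    simp at this

lemma key_bound (lam : ℝ) (hint : IsIntegral ℤ lam)
    (n : ℕ) [NeZero n] (μ : Fin n → ℂ)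
    (hroots : Polynomial.map (algebraMap ℤ ℂ) (minpoly ℤ lam) = ∏ j, (X - C (μ j)))
    (hμ0 : μ 0 = (lam : ℂ))
    (ℓ : Fin n → ℤ) (hne : (∑ i, (ℓ i : ℝ) * lam ^ (i : ℕ)) ≠ 0)
    (τ : Fin n → ℝ)
    (hb : ∀ j : Fin n, j ≠ 0 → ‖∑ i, (ℓ i : ℂ) * μ j ^ (i : ℕ)‖ < τ j) :
    (∏ j ∈ Finset.univ.erase (0 : Fin n), (τ j)⁻¹) ≤ |∑ i, (ℓ i : ℝ) * lam ^ (i : ℕ)| := by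
  obtain ⟨m, hm, hm0⟩ := key_int lam hint n μ hroots ℓ
  have hmne : m ≠ 0 := hm0 hne
  set a : ℝ := |∑ i, (ℓ i : ℝ) * lam ^ (i : ℕ)| with ha
  have ha0 : 0 ≤ a := abs_nonneg _
  have habs0 : ‖∑ i, (ℓ i : ℂ) * μ 0 ^ (i : ℕ)‖ = a := by
    have : (∑ i, (ℓ i : ℂ) * μ 0 ^ (i : ℕ)) = ((∑ i, (ℓ i : ℝ) * lam ^ (i : ℕ) : ℝ) : ℂ) := by
      rw [hμ0]; push_cast; ring
    rw [this, Complex.norm_real, Real.norm_eq_abs]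
  set P : ℝ := ∏ j ∈ Finset.univ.erase (0 : Fin n), τ j with hP
  have hτpos : ∀ j ∈ Finset.univ.erase (0 : Fin n), 0 < τ j := by
    intro j hj
    exact lt_of_le_of_lt (norm_nonneg _) (hb j (Finset.ne_of_mem_erase hj))
  have hPpos : 0 < P := Finset.prod_pos hτpos
  have h1 : (1 : ℝ) ≤ ‖(m : ℂ)‖ := by
    rw [Complex.norm_intCast]
    exact_mod_cast Int.one_le_abs hmne
  have h2 : ‖(m : ℂ)‖ = a * ∏ j ∈ Finset.univ.erase (0 : Fin n),
      ‖∑ i, (ℓ i : ℂ) * μ j ^ (i : ℕ)‖ := by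
    rw [hm, norm_prod, ← Finset.mul_prod_erase Finset.univ _ (Finset.mem_univ (0 : Fin n)),
      habs0]
  have h3 : (∏ j ∈ Finset.univ.erase (0 : Fin n),
      ‖∑ i, (ℓ i : ℂ) * μ j ^ (i : ℕ)‖) ≤ P := by
    refine Finset.prod_le_prod (fun j _ => norm_nonneg _) fun j hj => ?_
    exact (hb j (Finset.ne_of_mem_erase hj)).le
  have h4 : (1 : ℝ) ≤ a * P := by
    calc (1 : ℝ) ≤ ‖(m : ℂ)‖ := h1
      _ = a * _ := h2
      _ ≤ a * P := mul_le_mul_of_nonneg_left h3 ha0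
  have : (∏ j ∈ Finset.univ.erase (0 : Fin n), (τ j)⁻¹) = P⁻¹ := by
    rw [hP, ← Finset.prod_inv_distrib]
  rw [this, inv_eq_one_div, div_le_iff₀ hPpos]
  linarith

/-- Lower bound for nonzero quasilattice points and uniform discreteness of `𝔏(σ)`. -/
theorem stmt10 (lam : ℝ) (hlam : 1 < lam) (hint : IsIntegral ℤ lam)
    (n : ℕ) [NeZero n] (hn : (minpoly ℤ lam).natDegree = n)
    (μ : Fin n → ℂ)
    (hroots : Polynomial.map (algebraMap ℤ ℂ) (minpoly ℤ lam) = ∏ j, (X - C (μ j)))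
    (hμ0 : μ 0 = (lam : ℂ))
    (hPV : ∀ j : Fin n, j ≠ 0 → ‖μ j‖ < 1)
    (σ : Fin n → ℝ) (hσ : Admissible n μ σ) :
    (∀ ℓ : Fin n → ℤ,
      (∑ i, (ℓ i : ℝ) * lam ^ (i : ℕ)) ≠ 0 →
      (∀ j : Fin n, j ≠ 0 → ‖∑ i, (ℓ i : ℂ) * μ j ^ (i : ℕ)‖ < σ j) →
      (∏ j ∈ Finset.univ.erase (0 : Fin n), (σ j)⁻¹) ≤ |∑ i, (ℓ i : ℝ) * lam ^ (i : ℕ)|) ∧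
    ∀ x ∈ QL n μ σ, ∀ y ∈ QL n μ σ, x ≠ y →
      (2 : ℝ) ^ (1 - (n : ℤ)) * ∏ j ∈ Finset.univ.erase (0 : Fin n), (σ j)⁻¹ ≤ |x - y| := by
  constructor
  · intro ℓ hne hb
    exact key_bound lam hint n μ hroots hμ0 ℓ hne σ hb
  · rintro x ⟨ℓ, hxl, hxb⟩ y ⟨ℓ', hyl, hyb⟩ hxy
    set k : Fin n → ℤ := ℓ - ℓ' with hk
    have hsum : ∀ j : Fin n, (∑ i, (k i : ℂ) * μ j ^ (i : ℕ))
        = (∑ i, (ℓ i : ℂ) * μ j ^ (i : ℕ)) - ∑ i, (ℓ' i : ℂ) * μ j ^ (i : ℕ) := by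
      intro j
      rw [← Finset.sum_sub_distrib]
      refine Finset.sum_congr rfl fun i _ => ?_
      simp [hk]
      ring
    -- x - y equals the real sum for k
    have hxyC : ((x - y : ℝ) : ℂ) = ∑ i, (k i : ℂ) * μ 0 ^ (i : ℕ) := by
      rw [hsum 0, ← hxl, ← hyl]; push_cast; ring
    have hxyR : x - y = ∑ i, (k i : ℝ) * lam ^ (i : ℕ) := by
      have : ((x - y : ℝ) : ℂ) = ((∑ i, (k i : ℝ) * lam ^ (i : ℕ) : ℝ) : ℂ) := by
        rw [hxyC, hμ0]; push_cast; ring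
      exact_mod_cast this
    have hne : (∑ i, (k i : ℝ) * lam ^ (i : ℕ)) ≠ 0 := by
      rw [← hxyR]; exact sub_ne_zero_of_ne hxy
    have hb : ∀ j : Fin n, j ≠ 0 →
        ‖∑ i, (k i : ℂ) * μ j ^ (i : ℕ)‖ < 2 * σ j := by
      intro j hj
      rw [hsum j]
      calc ‖_‖ ≤ ‖∑ i, (ℓ i : ℂ) * μ j ^ (i : ℕ)‖
          + ‖∑ i, (ℓ' i : ℂ) * μ j ^ (i : ℕ)‖ := norm_sub_le _ _
        _ < σ j + σ j := add_lt_add (hxb j hj) (hyb j hj)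
        _ = 2 * σ j := by ring
    have hmain := key_bound lam hint n μ hroots hμ0 k hne (fun j => 2 * σ j) hb
    rw [← hxyR] at hmain
    refine le_trans (le_of_eq ?_) hmain
    have hcard : (Finset.univ.erase (0 : Fin n)).card = n - 1 := by
      rw [Finset.card_erase_of_mem (Finset.mem_univ _), Finset.card_univ, Fintype.card_fin]
    have hz : (2 : ℝ) ^ (1 - (n : ℤ)) = (2⁻¹ : ℝ) ^ (n - 1 : ℕ) := by
      have h1 : (1 : ℤ) - n = -((n - 1 : ℕ) : ℤ) := by
        have := NeZero.one_le (n := n)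
        push_cast [Nat.cast_sub this]
        ring
      rw [h1, zpow_neg, zpow_natCast, ← inv_pow]
    rw [hz, ← hcard]
    rw [Finset.prod_congr rfl (fun j (_ : j ∈ Finset.univ.erase (0 : Fin n)) =>
      (mul_inv (2:ℝ) (σ j) : ((2 : ℝ) * σ j)⁻¹ = 2⁻¹ * (σ j)⁻¹)),
      Finset.prod_mul_distrib, Finset.prod_const]
end

section
/- Let λ be a PV number of degree n with Vandermonde matrix V and σ an admissible vector. If L > |det V| · ∏_{j=2}^n σ_j^{-1}, then the quasilattice 𝔏(σ) contains a nonzero point in the open interval (−L, L). -/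
open Polynomial Matrix

section Stmt11Aux

open Complex in
private noncomputable def aP {n : ℕ} (τ : Fin n → Fin n) (j : Fin n) : ℂ :=
  if τ j = j then 1 else if j < τ j then 1/2 else -(Complex.I/2)

private noncomputable def bP {n : ℕ} (τ : Fin n → Fin n) (j : Fin n) : ℂ :=
  if τ j = j then 0 else if j < τ j then 1/2 else Complex.I/2

private noncomputable def Pmat {n : ℕ} (τ : Fin n → Fin n) : Matrix (Fin n) (Fin n) ℂ :=
  Matrix.of fun j c => (if c = j then aP τ j else 0) + (if c = τ j then bP τ j else 0)

/-- the real form of the (transposed) Vandermonde matrix -/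
private noncomputable def Mreal {n : ℕ} (τ : Fin n → Fin n) (μ : Fin n → ℂ) :
    Matrix (Fin n) (Fin n) ℝ :=
  Matrix.of fun j i =>
    if τ j = j then (μ j ^ (i : ℕ)).re
    else if j < τ j then (μ j ^ (i : ℕ)).re else (μ j ^ (i : ℕ)).im

variable {n : ℕ} (τ : Fin n → Fin n) (μ : Fin n → ℂ)

private lemma Pmat_row_expand (Q : Matrix (Fin n) (Fin n) ℂ) (j k : Fin n) :
    (Pmat τ * Q) j k = aP τ j * Q j k + bP τ j * Q (τ j) k := by
  rw [Matrix.mul_apply]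
  simp only [Pmat, Matrix.of_apply, add_mul]
  rw [Finset.sum_add_distrib]
  congr 1
  · rw [Finset.sum_eq_single j]
    · simp
    · intro c _ hc; simp [hc]
    · simp
  · rw [Finset.sum_eq_single (τ j)]
    · simp
    · intro c _ hc; simp [hc]
    · simp

private lemma Mreal_map (hconj : ∀ j, μ (τ j) = starRingEnd ℂ (μ j)) :
    (Mreal τ μ).map (Complex.ofReal) = Pmat τ * vandermonde μ := by
  ext j i
  rw [Pmat_row_expand τ]
  simp only [Mreal, Matrix.map_apply, Matrix.of_apply, vandermonde_apply]
  have hz : μ (τ j) ^ (i : ℕ) = starRingEnd ℂ (μ j ^ (i : ℕ)) := by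
    rw [hconj j, map_pow]
  by_cases hτ : τ j = j
  · have hre : starRingEnd ℂ (μ j) = μ j := by rw [← hconj j, hτ]
    obtain ⟨r, hr⟩ := Complex.conj_eq_iff_real.mp hre
    simp only [aP, bP, if_pos hτ, one_mul, zero_mul, add_zero, hr]
    norm_cast
  · by_cases hlt : j < τ j
    · simp only [aP, bP, if_neg hτ, if_pos hlt, if_neg hτ]
      rw [hz]
      have h0 := Complex.add_conj (μ j ^ (i : ℕ))
      push_cast at h0
      have h2 : (starRingEnd ℂ) (μ j ^ (i:ℕ)) = 2 * ((μ j ^ (i:ℕ)).re : ℂ) - μ j ^ (i:ℕ) := by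
        rw [← h0]; ring
      rw [h2]; ring
    · simp only [aP, bP, if_neg hτ, if_neg hlt]
      rw [hz]
      have h0 := Complex.sub_conj (μ j ^ (i : ℕ))
      push_cast at h0
      have h2 : (starRingEnd ℂ) (μ j ^ (i:ℕ))
          = μ j ^ (i:ℕ) - 2 * ((μ j ^ (i:ℕ)).im : ℂ) * Complex.I := by
        rw [← h0]; ring
      rw [h2]
      have hI := Complex.I_sq
      linear_combination (((μ j ^ (i:ℕ)).im : ℂ)) * hI

private lemma Pmat_mul_conjTranspose (hinv : Function.Involutive τ) :
    Pmat τ * (Pmat τ)ᴴ = Matrix.diagonal (fun j => if τ j = j then (1:ℂ) else 1/2) := by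
  ext j k
  rw [Pmat_row_expand τ]
  simp only [Matrix.conjTranspose_apply, Pmat, Matrix.of_apply, Matrix.diagonal_apply]
  by_cases hjk : j = k
  · subst hjk
    by_cases hτ : τ j = j
    · simp [aP, bP, hτ]
    · have h1 : ¬ (j = τ j) := fun h => hτ h.symm
      by_cases hlt : j < τ j
      · simp [aP, bP, hτ, hlt, h1]
        norm_num
      · simp [aP, bP, hτ, hlt, h1]
        simp [Complex.ext_iff]
        norm_num
  · have hne : ¬ (k = j) := fun h => hjk h.symm
    have hττ : ¬ (τ j = τ k) := fun h => hjk (hinv.injective h)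
    by_cases h2 : τ j = k
    · -- k = τ j, j ≠ k so τ j ≠ j
      subst h2
      have hτj : τ j ≠ j := fun h => hjk h.symm
      rcases lt_or_gt_of_ne (show j ≠ τ j from hjk) with hlt | hgt
      · simp only [Pmat, Matrix.of_apply, aP, bP, hinv j, if_neg hτj, if_pos rfl,
          if_neg hjk, if_pos hlt, if_neg (lt_asymm hlt), add_zero, zero_add,
          if_neg (show ¬ (j = τ j) from hjk), if_neg (show ¬ (τ j = j) from hτj)]
        simp [Complex.ext_iff]
      · simp only [Pmat, Matrix.of_apply, aP, bP, hinv j, if_neg hτj, if_pos rfl,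
          if_neg hjk, if_neg (not_lt_of_gt hgt), if_pos hgt, add_zero, zero_add,
          if_neg (show ¬ (j = τ j) from hjk), if_neg (show ¬ (τ j = j) from hτj)]
        simp [Complex.ext_iff]
    · -- supports disjoint
      have h3 : ¬ (j = τ k) := by
        intro h; exact h2 (by rw [h, hinv k])
      simp [hne, h2, h3, hττ, hjk]

private lemma abs_det_Pmat (hinv : Function.Involutive τ) :
    ‖(Pmat τ).det‖
      = (Real.sqrt (1/2)) ^ (Finset.univ.filter fun j => τ j ≠ j).card := by
  have h2 := congrArg Matrix.det (Pmat_mul_conjTranspose τ hinv)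
  rw [Matrix.det_mul, Matrix.det_conjTranspose, Matrix.det_diagonal] at h2
  have h1 : ((Complex.normSq (Pmat τ).det : ℂ))
      = ((1/2 : ℂ)) ^ (Finset.univ.filter fun j => τ j ≠ j).card := by
    rw [← Complex.mul_conj]
    show _ * star _ = _
    rw [h2, Finset.prod_ite]
    simp only [Finset.prod_const_one, one_mul, Finset.prod_const]
  have h3 : Complex.normSq (Pmat τ).det
      = ((1/2 : ℝ)) ^ (Finset.univ.filter fun j => τ j ≠ j).card := by
    have := congrArg Complex.re h1
    simp only [Complex.ofReal_re] at this
    rw [this, show ((1:ℂ)/2) = ((1/2 : ℝ) : ℂ) by norm_num, ← Complex.ofReal_pow,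
      Complex.ofReal_re]
  rw [Complex.norm_def, h3]
  rw [show ((1:ℝ)/2) ^ (Finset.univ.filter fun j => τ j ≠ j).card
      = (Real.sqrt (1/2) ^ (Finset.univ.filter fun j => τ j ≠ j).card) ^ 2 by
    rw [← pow_mul, mul_comm _ 2, pow_mul, Real.sq_sqrt (by norm_num)]]
  exact Real.sqrt_sq (by positivity)

private lemma abs_det_Mreal (hconj : ∀ j, μ (τ j) = starRingEnd ℂ (μ j))
    (hinv : Function.Involutive τ) :
    |(Mreal τ μ).det|
      = (Real.sqrt (1/2)) ^ (Finset.univ.filter fun j => τ j ≠ j).card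
        * ‖(vandermonde μ).det‖ := by
  have h := congrArg Matrix.det (Mreal_map τ μ hconj)
  rw [Matrix.det_mul] at h
  have h2 : ((Mreal τ μ).det : ℂ) = (Pmat τ).det * (vandermonde μ).det := by
    rw [← h]
    exact RingHom.map_det Complex.ofRealHom _
  have h3 : ‖((Mreal τ μ).det : ℂ)‖ = ‖(Pmat τ).det * (vandermonde μ).det‖ := by rw [h2]
  rw [Complex.norm_real, Real.norm_eq_abs, norm_mul, abs_det_Pmat τ hinv] at h3
  exact h3

end Stmt11Aux

/-- If `L > |det V| ∏_{j≥2} σ_j⁻¹` then `𝔏(σ)` contains a nonzero point of `(-L, L)`. -/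
theorem stmt11 (lam : ℝ) (hlam : 1 < lam) (hint : IsIntegral ℤ lam)
    (n : ℕ) [NeZero n] (hn : (minpoly ℤ lam).natDegree = n)
    (μ : Fin n → ℂ)
    (hroots : Polynomial.map (algebraMap ℤ ℂ) (minpoly ℤ lam) = ∏ j, (X - C (μ j)))
    (hμ0 : μ 0 = (lam : ℂ))
    (hPV : ∀ j : Fin n, j ≠ 0 → ‖μ j‖ < 1)
    (σ : Fin n → ℝ) (hσ : Admissible n μ σ)
    (L : ℝ)
    (hL : ‖(Matrix.vandermonde μ).det‖
            * ∏ j ∈ Finset.univ.erase (0 : Fin n), (σ j)⁻¹ < L) :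
    ∃ x ∈ QL n μ σ, x ≠ 0 ∧ x ∈ Set.Ioo (-L) L := by
  classical
  -- the minimal polynomial over ℚ
  have hq : IsIntegral ℚ lam := hint.tower_top
  have heq : minpoly ℚ lam = (minpoly ℤ lam).map (algebraMap ℤ ℚ) :=
    minpoly.isIntegrallyClosed_eq_field_fractions' ℚ hint
  have hqdeg : (minpoly ℚ lam).natDegree = n := by
    rw [heq, (minpoly.monic hint).natDegree_map]; exact hn
  -- μ is injective
  have hsep : (Polynomial.map (algebraMap ℤ ℂ) (minpoly ℤ lam)).Separable := by
    have hcomp : algebraMap ℤ ℂ = (algebraMap ℚ ℂ).comp (algebraMap ℤ ℚ) :=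
      Subsingleton.elim _ _
    rw [hcomp, ← Polynomial.map_map, ← heq]
    exact ((minpoly.irreducible hq).separable).map
  have hinj : Function.Injective μ := by
    rw [← Polynomial.separable_prod_X_sub_C_iff]
    rw [← hroots]; exact hsep
  have hV : (vandermonde μ).det ≠ 0 := Matrix.det_vandermonde_ne_zero_iff.mpr hinj
  -- the conjugation permutation τ
  have hconjpoly : (∏ j, (X - C (μ j))) = ∏ j, (X - C (starRingEnd ℂ (μ j))) := by
    have h1 : Polynomial.map (starRingEnd ℂ) (Polynomial.map (algebraMap ℤ ℂ) (minpoly ℤ lam))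
        = Polynomial.map (algebraMap ℤ ℂ) (minpoly ℤ lam) := by
      rw [Polynomial.map_map]
      congr 1
      exact Subsingleton.elim _ _
    calc (∏ j, (X - C (μ j)))
        = Polynomial.map (algebraMap ℤ ℂ) (minpoly ℤ lam) := hroots.symm
      _ = Polynomial.map (starRingEnd ℂ) (Polynomial.map (algebraMap ℤ ℂ) (minpoly ℤ lam)) :=
          h1.symm
      _ = Polynomial.map (starRingEnd ℂ) (∏ j, (X - C (μ j))) := by rw [hroots]
      _ = ∏ j, (X - C (starRingEnd ℂ (μ j))) := by
          rw [Polynomial.map_prod]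
          simp
  have hex : ∀ j, ∃ k, μ k = starRingEnd ℂ (μ j) := by
    intro j
    have h0 : eval (starRingEnd ℂ (μ j)) (∏ k, (X - C (μ k))) = 0 := by
      rw [hconjpoly, eval_prod]
      apply Finset.prod_eq_zero (Finset.mem_univ j)
      simp
    rw [eval_prod] at h0
    obtain ⟨k, _, hk⟩ := Finset.prod_eq_zero_iff.mp h0
    refine ⟨k, ?_⟩
    simp only [eval_sub, eval_X, eval_C] at hk
    exact (sub_eq_zero.mp hk).symm
  set τ : Fin n → Fin n := fun j => Classical.choose (hex j) with hτdef
  have hτ : ∀ j, μ (τ j) = starRingEnd ℂ (μ j) := fun j => Classical.choose_spec (hex j)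
  have hinvτ : Function.Involutive τ := by
    intro j
    apply hinj
    rw [hτ, hτ, Complex.conj_conj]
  have hτ0 : τ 0 = 0 := by
    apply hinj
    rw [hτ, hμ0, Complex.conj_ofReal]
  -- positivity facts
  have hσpos : ∀ j ∈ Finset.univ.erase (0 : Fin n), 0 < σ j := by
    intro j hj
    exact hσ.2.1 j (Finset.mem_erase.mp hj).1
  have hprodσ : 0 < ∏ j ∈ Finset.univ.erase (0 : Fin n), σ j :=
    Finset.prod_pos hσpos
  have hL0 : 0 < L := by
    refine lt_of_le_of_lt ?_ hL
    exact mul_nonneg (norm_nonneg _)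
      (Finset.prod_nonneg fun j hj => inv_nonneg.mpr (hσpos j hj).le)
  have habsV : ‖(vandermonde μ).det‖ < L * ∏ j ∈ Finset.univ.erase (0 : Fin n), σ j := by
    have h1 : (∏ j ∈ Finset.univ.erase (0 : Fin n), (σ j)⁻¹)
        = (∏ j ∈ Finset.univ.erase (0 : Fin n), σ j)⁻¹ := by
      rw [← Finset.prod_inv_distrib]
    rw [h1] at hL
    calc ‖(vandermonde μ).det‖
        = ‖(vandermonde μ).det‖ * (∏ j ∈ Finset.univ.erase (0 : Fin n), σ j)⁻¹
          * (∏ j ∈ Finset.univ.erase (0 : Fin n), σ j) := by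
          field_simp
      _ < L * ∏ j ∈ Finset.univ.erase (0 : Fin n), σ j := by
          exact mul_lt_mul_of_pos_right hL hprodσ
  -- constants
  set κ : ℝ := Real.sqrt (1/2) with hκdef
  have hκpos : 0 < κ := Real.sqrt_pos.mpr (by norm_num)
  have hκsq : κ ^ 2 = 1/2 := Real.sq_sqrt (by norm_num)
  set T : ℕ := (Finset.univ.filter fun j => τ j ≠ j).card with hTdef
  -- the matrix M
  set M : Matrix (Fin n) (Fin n) ℝ := Mreal τ μ with hMdef
  have hdetM : |M.det| = κ ^ T * ‖(vandermonde μ).det‖ := abs_det_Mreal τ μ hτ hinvτ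
  have habsVpos : 0 < ‖(vandermonde μ).det‖ := by
    exact norm_pos_iff.mpr hV
  have hMne : M.det ≠ 0 := by
    intro h
    rw [h, abs_zero] at hdetM
    have h1 : 0 < κ ^ T * ‖(vandermonde μ).det‖ := by positivity
    exact h1.ne' hdetM.symm
  -- the convex body
  set c : Fin n → ℝ := fun j => if j = 0 then L else if τ j = j then σ j else σ j * κ
    with hcdef
  have hcpos : ∀ j, 0 < c j := by
    intro j
    by_cases hj : j = 0
    · simp [hcdef, hj, hL0]
    · by_cases hτj : τ j = j
      · simp [hcdef, hj, hτj, hσ.2.1 j hj]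
      · have := hσ.2.1 j hj
        simp only [hcdef, if_neg hj, if_neg hτj]
        positivity
  set S : Set (Fin n → ℝ) := Set.univ.pi fun j => Set.Ioo (-(c j)) (c j) with hSdef
  have hconv : Convex ℝ S := convex_pi fun i _ => convex_Ioo _ _
  have hsymm : ∀ x ∈ S, -x ∈ S := by
    intro x hx
    intro j hj
    have := hx j hj
    simp only [Set.mem_Ioo, Pi.neg_apply] at this ⊢
    constructor <;> linarith [this.1, this.2]
  have hSvol : MeasureTheory.volume S = ENNReal.ofReal (∏ j, (2 * c j)) := by
    rw [hSdef, MeasureTheory.volume_pi_pi]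
    rw [ENNReal.ofReal_prod_of_nonneg (fun j _ => by have := hcpos j; positivity)]
    congr 1
    ext j
    rw [Real.volume_Ioo]
    congr 1
    ring
  -- the lattice
  have hMinv : Invertible M := M.invertibleOfIsUnitDet (isUnit_iff_ne_zero.mpr hMne)
  set B : Module.Basis (Fin n) ℝ (Fin n → ℝ) :=
    (Pi.basisFun ℝ (Fin n)).map (M.toLinearEquiv' hMinv) with hBdef
  have hBapply : ∀ i, B i = fun j => M j i := by
    intro i
    ext j
    rw [hBdef, Module.Basis.map_apply, Pi.basisFun_apply]
    have : (M.toLinearEquiv' hMinv) (Pi.single i 1) = M.mulVec (Pi.single i 1) := rfl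
    rw [this, Matrix.mulVec_single]
    simp
  have hBmat : Matrix.of (⇑B) = Mᵀ := by
    ext i j
    rw [Matrix.of_apply, hBapply i, Matrix.transpose_apply]
  have hFvol : MeasureTheory.volume (ZSpan.fundamentalDomain B)
      = ENNReal.ofReal |M.det| := by
    rw [ZSpan.volume_fundamentalDomain, hBmat, Matrix.det_transpose]
  -- the filtered product identities
  have hfiltereq : (Finset.univ.erase (0 : Fin n)).filter (fun j => τ j ≠ j)
      = Finset.univ.filter (fun j => τ j ≠ j) := by
    ext j
    simp only [Finset.mem_filter, Finset.mem_erase, Finset.mem_univ, and_true, true_and]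
    constructor
    · rintro ⟨_, h⟩; exact h
    · intro h
      refine ⟨?_, h⟩
      intro h0
      rw [h0] at h
      exact h hτ0
  have hprodc : ∏ j, c j = L * ((∏ j ∈ Finset.univ.erase (0 : Fin n), σ j) * κ ^ T) := by
    have hc0 : c 0 = L := by simp [hcdef]
    rw [← Finset.mul_prod_erase Finset.univ c (Finset.mem_univ 0), hc0]
    congr 1
    have h1 : ∀ j ∈ Finset.univ.erase (0 : Fin n),
        c j = σ j * (if τ j = j then 1 else κ) := by
      intro j hj
      have hj0 := (Finset.mem_erase.mp hj).1
      by_cases hτj : τ j = j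
      · simp [hcdef, hj0, hτj]
      · simp [hcdef, hj0, hτj]
    rw [Finset.prod_congr rfl h1, Finset.prod_mul_distrib]
    congr 1
    rw [Finset.prod_ite, Finset.prod_const, Finset.prod_const, one_pow, one_mul]
    congr 1
    rw [hTdef, ← hfiltereq]
  -- the key measure inequality
  have hkey : MeasureTheory.volume (ZSpan.fundamentalDomain B)
      * 2 ^ (Module.finrank ℝ (Fin n → ℝ)) < MeasureTheory.volume S := by
    rw [hFvol, hSvol, Module.finrank_fin_fun]
    calc ENNReal.ofReal |M.det| * 2 ^ n
        = ENNReal.ofReal (|M.det| * 2 ^ n) := by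
          rw [ENNReal.ofReal_mul (abs_nonneg _)]
          congr 1
          rw [ENNReal.ofReal_pow (by norm_num)]
          norm_num
      _ < ENNReal.ofReal (∏ j, (2 * c j)) := by
          rw [ENNReal.ofReal_lt_ofReal_iff (by
            apply Finset.prod_pos
            intro j _
            have := hcpos j
            positivity)]
          rw [Finset.prod_mul_distrib, Finset.prod_const, Finset.card_univ, Fintype.card_fin]
          rw [hprodc, hdetM]
          have hκT : 0 < κ ^ T := by positivity
          calc κ ^ T * ‖(vandermonde μ).det‖ * 2 ^ n
              < κ ^ T * (L * ∏ j ∈ Finset.univ.erase (0 : Fin n), σ j) * 2 ^ n := by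
                apply mul_lt_mul_of_pos_right _ (by positivity)
                exact mul_lt_mul_of_pos_left habsV hκT
            _ = 2 ^ n * (L * ((∏ j ∈ Finset.univ.erase (0 : Fin n), σ j) * κ ^ T)) := by
                ring
  -- Minkowski
  haveI : Countable (Submodule.span ℤ (Set.range ⇑B)).toAddSubgroup :=
    inferInstanceAs (Countable (Submodule.span ℤ (Set.range ⇑B)))
  obtain ⟨v, hv0, hvS⟩ :=
    MeasureTheory.exists_ne_zero_mem_lattice_of_measure_mul_two_pow_lt_measure
      (ZSpan.isAddFundamentalDomain' B MeasureTheory.volume) hsymm hconv hkey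
  -- extract integer coordinates
  have hvmem : (v : Fin n → ℝ) ∈ Submodule.span ℤ (Set.range ⇑B) := v.2
  have hrep := (B.mem_span_iff_repr_mem ℤ (v : Fin n → ℝ)).mp hvmem
  set ℓ : Fin n → ℤ := fun i => Classical.choose (hrep i) with hℓdef
  have hℓ : ∀ i, ((ℓ i : ℝ)) = B.repr (v : Fin n → ℝ) i := fun i =>
    Classical.choose_spec (hrep i)
  set y : Fin n → ℝ := (v : Fin n → ℝ) with hydef
  have hy : ∀ j, y j = ∑ i, (ℓ i : ℝ) * M j i := by
    intro j
    have hsum := B.sum_repr (v : Fin n → ℝ)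
    calc y j = (∑ i, B.repr (v : Fin n → ℝ) i • B i) j := by rw [hsum]
      _ = ∑ i, B.repr (v : Fin n → ℝ) i * B i j := by
          rw [Finset.sum_apply]
          congr 1
      _ = ∑ i, (ℓ i : ℝ) * M j i := by
          apply Finset.sum_congr rfl
          intro i _
          rw [← hℓ i, hBapply i]
  -- the complex sums
  set z : Fin n → ℂ := fun j => ∑ i, (ℓ i : ℂ) * μ j ^ (i : ℕ) with hzdef
  have hzre : ∀ j, (z j).re = ∑ i, (ℓ i : ℝ) * (μ j ^ (i : ℕ)).re := by
    intro j
    rw [hzdef, Complex.re_sum]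
    apply Finset.sum_congr rfl
    intro i _
    simp [Complex.mul_re]
  have hzim : ∀ j, (z j).im = ∑ i, (ℓ i : ℝ) * (μ j ^ (i : ℕ)).im := by
    intro j
    rw [hzdef, Complex.im_sum]
    apply Finset.sum_congr rfl
    intro i _
    simp [Complex.mul_im]
  have hzconj : ∀ j, z (τ j) = starRingEnd ℂ (z j) := by
    intro j
    rw [hzdef, map_sum]
    apply Finset.sum_congr rfl
    intro i _
    rw [RingHom.map_mul, map_pow, ← hτ j]
    simp
  -- membership bounds
  have habsy : ∀ j, |y j| < c j := by
    intro j
    have := hvS j (Set.mem_univ j)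
    rw [Set.mem_Ioo] at this
    rw [abs_lt]
    exact ⟨by linarith [this.1], this.2⟩
  -- real rows
  have hreal : ∀ j, τ j = j → z j = ((y j : ℝ) : ℂ) := by
    intro j hτj
    have h1 : starRingEnd ℂ (z j) = z j := by rw [← hzconj j, hτj]
    have h2 := Complex.conj_eq_iff_re.mp h1
    have h3 : (z j).re = y j := by
      rw [hzre, hy j]
      apply Finset.sum_congr rfl
      intro i _
      congr 1
      simp [hMdef, Mreal, hτj]
    rw [← h3, h2]
  -- the point
  refine ⟨y 0, ⟨ℓ, ?_, ?_⟩, ?_, ?_⟩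
  · show ((y 0 : ℝ) : ℂ) = z 0
    exact (hreal 0 hτ0).symm
  · -- the quasilattice conditions
    intro j hj
    show ‖z j‖ < σ j
    by_cases hτj : τ j = j
    · rw [hreal j hτj, Complex.norm_real, Real.norm_eq_abs]
      have := habsy j
      simpa [hcdef, hj, hτj] using this
    · -- complex case
      have hτj0 : τ j ≠ 0 := fun h => hj (by rw [← hinvτ j, h, hτ0])
      have hστ : σ (τ j) = σ j := hσ.2.2 (τ j) j (hτ j)
      have hττj : τ (τ j) ≠ τ j := by
        rw [hinvτ j]; exact fun h => hτj h.symm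
      -- identify y j, y (τ j) with re/im of z j
      have hyj_re : τ j ≠ j → j < τ j → y j = (z j).re ∧ y (τ j) = -((z j).im) := by
        intro _ hlt
        constructor
        · rw [hzre, hy j]
          apply Finset.sum_congr rfl
          intro i _
          congr 1
          simp [hMdef, Mreal, hτj, hlt]
        · have : y (τ j) = (z (τ j)).im := by
            rw [hzim, hy (τ j)]
            apply Finset.sum_congr rfl
            intro i _
            congr 1
            have hnlt : ¬ (τ j < τ (τ j)) := by rw [hinvτ j]; exact not_lt_of_gt hlt
            simp [hMdef, Mreal, hττj, hnlt]
          rw [this, hzconj j]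
          simp
      have hyj_im : τ j < j → y j = (z j).im ∧ y (τ j) = (z j).re := by
        intro hlt
        constructor
        · rw [hzim, hy j]
          apply Finset.sum_congr rfl
          intro i _
          congr 1
          simp [hMdef, Mreal, hτj, not_lt_of_gt hlt]
        · have : y (τ j) = (z (τ j)).re := by
            rw [hzre, hy (τ j)]
            apply Finset.sum_congr rfl
            intro i _
            congr 1
            have hlt2 : τ j < τ (τ j) := by rw [hinvτ j]; exact hlt
            simp [hMdef, Mreal, hττj, hlt2]
          rw [this, hzconj j]
          simp
      have hcj : c j = σ j * κ := by rw [hcdef]; simp [hj, hτj]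
      have hcτj : c (τ j) = σ j * κ := by
        rw [hcdef]
        simp only [if_neg hτj0, if_neg hττj]
        rw [hστ]
      have hb1 : |y j| < σ j * κ := hcj ▸ habsy j
      have hb2 : |y (τ j)| < σ j * κ := hcτj ▸ habsy (τ j)
      have hre2 : (z j).re ^ 2 + (z j).im ^ 2 = y j ^ 2 + y (τ j) ^ 2 := by
        rcases lt_or_gt_of_ne (fun h => hτj h.symm : j ≠ τ j) with hlt | hgt
        · obtain ⟨e1, e2⟩ := hyj_re hτj hlt
          rw [e1, e2]; ring
        · obtain ⟨e1, e2⟩ := hyj_im hgt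
          rw [e1, e2]; ring
      have h3 : (σ j * κ) ^ 2 = σ j ^ 2 / 2 := by
        rw [mul_pow, hκsq]; ring
      have h1 : y j ^ 2 < σ j ^ 2 / 2 := by
        rw [← h3, ← sq_abs (y j)]
        exact pow_lt_pow_left₀ hb1 (abs_nonneg _) (by norm_num)
      have h2 : y (τ j) ^ 2 < σ j ^ 2 / 2 := by
        rw [← h3, ← sq_abs (y (τ j))]
        exact pow_lt_pow_left₀ hb2 (abs_nonneg _) (by norm_num)
      have hσj := hσ.2.1 j hj
      have hsq : ‖z j‖ ^ 2 < σ j ^ 2 := by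
        rw [Complex.sq_norm, Complex.normSq_apply]
        have : (z j).re * (z j).re + (z j).im * (z j).im
            = (z j).re ^ 2 + (z j).im ^ 2 := by ring
        rw [this, hre2]
        linarith
      exact lt_of_pow_lt_pow_left₀ 2 hσj.le hsq
  · -- nonzero
    intro h0
    have hz0 : z 0 = 0 := by
      rw [hreal 0 hτ0, h0, Complex.ofReal_zero]
    have hsum0 : ∑ i : Fin n, (ℓ i : ℝ) * lam ^ (i : ℕ) = 0 := by
      have hcast : ((∑ i : Fin n, (ℓ i : ℝ) * lam ^ (i : ℕ) : ℝ) : ℂ) = z 0 := by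
        rw [hzdef]
        simp only [hμ0]
        push_cast
        rfl
      rw [hz0] at hcast
      exact_mod_cast hcast
    have li := linearIndependent_pow (K := ℚ) (lam : ℝ)
    rw [hqdeg] at li
    have hℓ0 : ∀ i, ℓ i = 0 := by
      have hs : ∑ i : Fin n, ((ℓ i : ℚ)) • lam ^ (i : ℕ) = 0 := by
        rw [← hsum0]
        apply Finset.sum_congr rfl
        intro i _
        rw [Rat.smul_def]
        push_cast
        ring
      intro i
      have := Fintype.linearIndependent_iff.mp li (fun i => (ℓ i : ℚ)) hs i
      exact_mod_cast this
    apply hv0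
    have hy0 : (v : Fin n → ℝ) = 0 := by
      funext j
      have := hy j
      rw [hydef] at this
      rw [this]
      simp [hℓ0]
    exact Subtype.ext hy0
  · -- interval
    have := habsy 0
    rw [hcdef] at this
    simp only [if_pos rfl] at this
    rw [Set.mem_Ioo]
    rw [abs_lt] at this
    exact ⟨this.1, this.2⟩
end

section
/- Let λ be a PV number of degree n whose minimal polynomial has constant term c_0 with |c_0| = 1 (i.e., λ is a unit). Then for every admissible σ, λ · 𝔏(σ) = 𝔏((0, |λ_2|σ_2, ..., |λ_n|σ_n)^T). -/
open Polynomial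

lemma aux_eval_sum (n : ℕ) (r : Polynomial ℤ) (hr : r.natDegree < n) (z : ℂ) :
    ∑ i : Fin n, (r.coeff (i : ℕ) : ℂ) * z ^ (i : ℕ) = aeval z r := by
  rw [Fin.sum_univ_eq_sum_range (fun i => (r.coeff i : ℂ) * z ^ i) n]
  rw [aeval_def, eval₂_eq_eval_map,
    Polynomial.eval_eq_sum_range' (lt_of_le_of_lt natDegree_map_le hr)]
  exact Finset.sum_congr rfl fun i _ => by simp [coeff_map]

lemma aux_eval_ell (n : ℕ) (ℓ : Fin n → ℤ) (z : ℂ) :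
    aeval z (∑ i : Fin n, C (ℓ i) * X ^ (i : ℕ)) = ∑ i : Fin n, (ℓ i : ℂ) * z ^ (i : ℕ) := by
  simp

/-- If the PV number `λ` is a unit (`|c_0| = 1`) then
`λ · 𝔏(σ) = 𝔏((0, |λ_2| σ_2, …, |λ_n| σ_n))`. -/
theorem stmt12 (lam : ℝ) (hlam : 1 < lam) (hint : IsIntegral ℤ lam)
    (n : ℕ) [NeZero n] (hn : (minpoly ℤ lam).natDegree = n)
    (μ : Fin n → ℂ)
    (hroots : Polynomial.map (algebraMap ℤ ℂ) (minpoly ℤ lam) = ∏ j, (X - C (μ j)))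
    (hμ0 : μ 0 = (lam : ℂ))
    (hPV : ∀ j : Fin n, j ≠ 0 → ‖μ j‖ < 1)
    (hunit : |(minpoly ℤ lam).coeff 0| = 1)
    (σ : Fin n → ℝ) (hσ : Admissible n μ σ) :
    (fun x : ℝ => lam * x) '' QL n μ σ
      = QL n μ (fun j => if j = 0 then 0 else ‖μ j‖ * σ j) := by
  set m := minpoly ℤ lam with hm_def
  have hmon : m.Monic := minpoly.monic hint
  have hnpos : 0 < n := Nat.pos_of_ne_zero (NeZero.ne n)
  have hlam0 : (lam : ℝ) ≠ 0 := by positivity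
  -- each μ j is a root of m (over ℂ)
  have hroot : ∀ j : Fin n, aeval (μ j) m = 0 := by
    intro j
    have h := congrArg (eval (μ j)) hroots
    rw [eval_prod] at h
    rw [aeval_def, eval₂_eq_eval_map, h]
    exact Finset.prod_eq_zero (Finset.mem_univ j) (by simp)
  -- reduction mod m preserves evaluation at roots
  have hmod : ∀ (p : Polynomial ℤ) (j : Fin n), aeval (μ j) (p %ₘ m) = aeval (μ j) p := by
    intro p j
    conv_rhs => rw [← modByMonic_add_div p m]
    simp [hroot j]
  have hmoddeg : ∀ p : Polynomial ℤ, (p %ₘ m).natDegree < n := by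
    intro p
    rcases eq_or_ne (p %ₘ m) 0 with h | h
    · simpa [h] using hnpos
    · rw [← hn]
      exact natDegree_lt_natDegree h (degree_modByMonic_lt p hmon)
  -- the inverse polynomial q, with μ j * q(μ j) = 1
  set c0 : ℤ := m.coeff 0 with hc0_def
  have hc0sq : ((c0 : ℂ)) * (c0 : ℂ) = 1 := by
    rcases (abs_eq (by norm_num : (0:ℤ) ≤ 1)).mp hunit with h | h <;> simp [h]
  set s : Polynomial ℤ := ∑ i ∈ Finset.range n, C (m.coeff (i + 1)) * X ^ i with hs_def
  have hXs : X * s = m - C c0 := by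
    have h2 : X * s = ∑ i ∈ Finset.range n, (monomial (i + 1)) (m.coeff (i + 1)) := by
      rw [hs_def, Finset.mul_sum]
      exact Finset.sum_congr rfl fun i _ => by rw [← C_mul_X_pow_eq_monomial]; ring
    rw [eq_sub_iff_add_eq]
    have h3 : X * s + C c0 = ∑ i ∈ Finset.range (n + 1), (monomial i) (m.coeff i) := by
      rw [Finset.sum_range_succ', h2, monomial_zero_left]
    rw [h3, ← as_sum_range' m (n + 1) (by omega)]
  set q : Polynomial ℤ := -C c0 * s with hq_def
  have hqinv : ∀ j : Fin n, μ j * aeval (μ j) q = 1 := by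
    intro j
    have h1 : μ j * aeval (μ j) s = -(c0 : ℂ) := by
      have := congrArg (aeval (μ j)) hXs
      simpa [hroot j] using this
    have h2 : aeval (μ j) q = -(c0 : ℂ) * aeval (μ j) s := by
      rw [hq_def, map_mul, map_neg, aeval_C, algebraMap_int_eq, eq_intCast]
    calc μ j * aeval (μ j) q = -(c0 : ℂ) * (μ j * aeval (μ j) s) := by rw [h2]; ring
      _ = -(c0 : ℂ) * -(c0 : ℂ) := by rw [h1]
      _ = 1 := by rw [neg_mul_neg, hc0sq]
  have hμne : ∀ j : Fin n, μ j ≠ 0 := by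
    intro j h
    have := hqinv j
    rw [h] at this
    simp at this
  have hμpos : ∀ j : Fin n, 0 < ‖μ j‖ := fun j =>
    norm_pos_iff.mpr (hμne j)
  have hqabs : ∀ j : Fin n, ‖aeval (μ j) q‖ = (‖μ j‖)⁻¹ := by
    intro j
    have h := congrArg (‖·‖) (hqinv j)
    rw [norm_mul, norm_one] at h
    rw [mul_comm] at h
    exact eq_inv_of_mul_eq_one_left h
  ext x
  constructor
  · rintro ⟨y, ⟨ℓ, hy, hb⟩, rfl⟩
    set p : Polynomial ℤ := ∑ i : Fin n, C (ℓ i) * X ^ (i : ℕ) with hp_def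
    have hpev : ∀ j : Fin n, aeval (μ j) p = ∑ i : Fin n, (ℓ i : ℂ) * μ j ^ (i : ℕ) :=
      fun j => aux_eval_ell n ℓ (μ j)
    set r : Polynomial ℤ := (X * p) %ₘ m with hr_def
    have hrev : ∀ j : Fin n, aeval (μ j) r = μ j * ∑ i : Fin n, (ℓ i : ℂ) * μ j ^ (i : ℕ) := by
      intro j
      rw [hr_def, hmod, map_mul, aeval_X, hpev]
    refine ⟨fun i => r.coeff i, ?_, ?_⟩
    · rw [aux_eval_sum n r (hmoddeg _) (μ 0), hrev 0, ← hy, hμ0]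
      push_cast; ring
    · intro j hj
      rw [aux_eval_sum n r (hmoddeg _) (μ j), hrev j, norm_mul]
      simp only [hj, if_false]
      exact mul_lt_mul_of_pos_left (hb j hj) (hμpos j)
  · rintro ⟨ℓ, hx, hb⟩
    set p : Polynomial ℤ := ∑ i : Fin n, C (ℓ i) * X ^ (i : ℕ) with hp_def
    have hpev : ∀ j : Fin n, aeval (μ j) p = ∑ i : Fin n, (ℓ i : ℂ) * μ j ^ (i : ℕ) :=
      fun j => aux_eval_ell n ℓ (μ j)
    set r : Polynomial ℤ := (q * p) %ₘ m with hr_def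
    have hrev : ∀ j : Fin n,
        aeval (μ j) r = aeval (μ j) q * ∑ i : Fin n, (ℓ i : ℂ) * μ j ^ (i : ℕ) := by
      intro j
      rw [hr_def, hmod, map_mul, hpev]
    refine ⟨x / lam, ⟨fun i => r.coeff i, ?_, ?_⟩, by field_simp⟩
    · rw [aux_eval_sum n r (hmoddeg _) (μ 0), hrev 0, ← hx]
      have h0 : aeval (μ 0) q = (μ 0)⁻¹ := eq_inv_of_mul_eq_one_left (by rw [mul_comm]; exact hqinv 0)
      rw [h0, hμ0, Complex.ofReal_div, div_eq_inv_mul]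
    · intro j hj
      rw [aux_eval_sum n r (hmoddeg _) (μ j), hrev j, norm_mul, hqabs j]
      have hbj := hb j hj
      simp only [hj, if_false] at hbj
      calc (‖μ j‖)⁻¹ * ‖∑ i : Fin n, (ℓ i : ℂ) * μ j ^ (i : ℕ)‖
          < (‖μ j‖)⁻¹ * (‖μ j‖ * σ j) :=
            mul_lt_mul_of_pos_left hbj (inv_pos.mpr (hμpos j))
        _ = σ j := inv_mul_cancel_left₀ (hμpos j).ne' _
end

section
/- Let λ be a PV number of degree n that is a unit (|c_0| = 1), and let σ ∈ ℝ^n be admissible. Define ξ = (0, (1−|λ_2|)σ_2, ..., (1−|λ_n|)σ_n)^T; then ξ is admissible. Suppose f is a compactly supported distribution satisfying f(x) = Σ_{j=1}^m a_j f(λx − τ_j) with all τ_j ∈ 𝔏(ξ). Then the spaces W_k = span{ f(λ^k x − τ) : τ ∈ 𝔏(σ) } satisfy W_k ⊆ W_{k+1} for all k ∈ ℤ. -/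
open Polynomial

lemma evalFinSum (n : ℕ) (ℓ : Fin n → ℤ) (z : ℂ) :
    Polynomial.eval z (Polynomial.map (algebraMap ℤ ℂ)
        (∑ i : Fin n, Polynomial.C (ℓ i) * Polynomial.X ^ (i : ℕ))) =
      ∑ i : Fin n, (ℓ i : ℂ) * z ^ (i : ℕ) := by
  simp [Polynomial.map_sum, Polynomial.eval_finset_sum]

lemma evalLow {n : ℕ} {r : Polynomial ℤ} (hr : r.natDegree < n) (z : ℂ) :
    Polynomial.eval z (r.map (algebraMap ℤ ℂ)) = ∑ i : Fin n, ((r.coeff i : ℤ) : ℂ) * z ^ (i : ℕ) := by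
  rw [Polynomial.eval_eq_sum_range' (lt_of_le_of_lt Polynomial.natDegree_map_le hr),
    Fin.sum_univ_eq_sum_range (fun i => ((r.coeff i : ℂ)) * z ^ i)]
  simp [Polynomial.coeff_map]

lemma evalReduce (P : Polynomial ℤ) (hmon : P.Monic) (p : Polynomial ℤ) (z : ℂ)
    (hz : Polynomial.eval z (P.map (algebraMap ℤ ℂ)) = 0) :
    Polynomial.eval z (p.map (algebraMap ℤ ℂ)) =
      Polynomial.eval z ((p %ₘ P).map (algebraMap ℤ ℂ)) := by
  conv_lhs => rw [← Polynomial.modByMonic_add_div p P]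
  rw [Polynomial.map_add, Polynomial.map_mul, Polynomial.eval_add, Polynomial.eval_mul, hz,
    zero_mul, add_zero]

/-- Multiscale construction: if the PV number `λ` is a unit, `σ` is admissible,
`ξ = (0, (1-|λ_2|)σ_2, …, (1-|λ_n|)σ_n)`, and `f` is a compactly supported refinable
function with translates `τ_j ∈ 𝔏(ξ)`, then `ξ` is admissible and the spaces
`W_k = span { f(λ^k x − τ) : τ ∈ 𝔏(σ) }` satisfy `W_k ⊆ W_{k+1}`. -/
theorem stmt13 (lam : ℝ) (hlam : 1 < lam) (hint : IsIntegral ℤ lam)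
    (n : ℕ) [NeZero n] (hn : (minpoly ℤ lam).natDegree = n)
    (μ : Fin n → ℂ)
    (hroots : Polynomial.map (algebraMap ℤ ℂ) (minpoly ℤ lam) = ∏ j, (X - C (μ j)))
    (hμ0 : μ 0 = (lam : ℂ))
    (hPV : ∀ j : Fin n, j ≠ 0 → ‖μ j‖ < 1)
    (hunit : |(minpoly ℤ lam).coeff 0| = 1)
    (σ : Fin n → ℝ) (hσ : Admissible n μ σ)
    (ξ : Fin n → ℝ)
    (hξ : ξ = fun j => if j = 0 then 0 else (1 - ‖μ j‖) * σ j)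
    (m : ℕ) (a : Fin m → ℂ) (τ : Fin m → ℝ)
    (f : ℝ → ℂ) (hsupp : HasCompactSupport f)
    (href : ∀ x : ℝ, f x = ∑ j, a j * f (lam * x - τ j))
    (hτ : ∀ j, τ j ∈ QL n μ ξ)
    (W : ℤ → Submodule ℂ (ℝ → ℂ))
    (hW : ∀ k : ℤ, W k = Submodule.span ℂ
      { g : ℝ → ℂ | ∃ t ∈ QL n μ σ, g = fun x => f (lam ^ k * x - t) }) :
    Admissible n μ ξ ∧ ∀ k : ℤ, W k ≤ W (k + 1) := by
  obtain ⟨hσ0, hσpos, hσconj⟩ := hσ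
  have hlampos : (0 : ℝ) < lam := lt_trans one_pos hlam
  -- `ξ` is admissible
  have hξadm : Admissible n μ ξ := by
    subst hξ
    refine ⟨by simp, ?_, ?_⟩
    · intro j hj
      simp only [if_neg hj]
      exact mul_pos (by linarith [hPV j hj]) (hσpos j hj)
    · intro j k hjk
      by_cases hj : j = 0
      · by_cases hk : k = 0
        · simp [hj, hk]
        · exfalso
          have hμk : μ k = (lam : ℂ) := by
            have h := congrArg (starRingEnd ℂ) hjk
            rw [hj, hμ0] at h
            simpa [Complex.conj_ofReal] using h.symm
          have h2 := hPV k hk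
          rw [hμk] at h2
          simp [Complex.norm_real, abs_of_pos hlampos] at h2
          linarith
      · by_cases hk : k = 0
        · exfalso
          have hμj : μ j = (lam : ℂ) := by
            rw [hjk, hk, hμ0, Complex.conj_ofReal]
          have h2 := hPV j hj
          rw [hμj] at h2
          simp [Complex.norm_real, abs_of_pos hlampos] at h2
          linarith
        · have habs : ‖μ j‖ = ‖μ k‖ := by
            rw [hjk, Complex.norm_conj]
          simp only [if_neg hj, if_neg hk, habs, hσconj j k hjk]
  refine ⟨hξadm, ?_⟩
  -- roots of the minimal polynomial
  have hroot : ∀ j : Fin n, Polynomial.eval (μ j)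
      ((minpoly ℤ lam).map (algebraMap ℤ ℂ)) = 0 := by
    intro j
    rw [hroots, Polynomial.eval_prod]
    exact Finset.prod_eq_zero (Finset.mem_univ j) (by simp)
  have hmon : (minpoly ℤ lam).Monic := minpoly.monic hint
  have hP1 : minpoly ℤ lam ≠ 1 := by
    intro h
    rw [h] at hn
    simp at hn
    exact (NeZero.ne n) hn.symm
  -- key fact: λ·𝔏(σ) + 𝔏(ξ) ⊆ 𝔏(σ)
  have key : ∀ t ∈ QL n μ σ, ∀ s ∈ QL n μ ξ, lam * t + s ∈ QL n μ σ := by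
    rintro t ⟨ℓt, htv, htb⟩ s ⟨ℓs, hsv, hsb⟩
    set p : Polynomial ℤ := ∑ i : Fin n, Polynomial.C (ℓt i) * Polynomial.X ^ (i : ℕ) with hp
    set q : Polynomial ℤ := (Polynomial.X * p) %ₘ (minpoly ℤ lam) with hq
    have hqdeg : q.natDegree < n :=
      hn ▸ Polynomial.natDegree_modByMonic_lt _ hmon hP1
    have hkey : ∀ j : Fin n, μ j * ∑ i : Fin n, (ℓt i : ℂ) * μ j ^ (i : ℕ)
        = ∑ i : Fin n, ((q.coeff i : ℤ) : ℂ) * μ j ^ (i : ℕ) := by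
      intro j
      have h1 := evalReduce (minpoly ℤ lam) hmon (Polynomial.X * p) (μ j) (hroot j)
      rw [← hq] at h1
      rw [← evalLow hqdeg, ← h1, Polynomial.map_mul, Polynomial.map_X,
        Polynomial.eval_mul, Polynomial.eval_X, hp, evalFinSum]
    have hsplit : ∀ j : Fin n,
        (∑ i : Fin n, ((q.coeff i + ℓs i : ℤ) : ℂ) * μ j ^ (i : ℕ))
          = μ j * (∑ i : Fin n, (ℓt i : ℂ) * μ j ^ (i : ℕ))
            + ∑ i : Fin n, (ℓs i : ℂ) * μ j ^ (i : ℕ) := by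
      intro j
      rw [hkey j, ← Finset.sum_add_distrib]
      push_cast
      simp [add_mul]
    refine ⟨fun i => q.coeff i + ℓs i, ?_, ?_⟩
    · rw [hsplit 0, ← htv, ← hsv, hμ0]
      push_cast
      ring
    · intro j hj
      rw [hsplit j]
      have h1 := htb j hj
      have h2 := hsb j hj
      rw [hξ] at h2
      simp only [if_neg hj] at h2
      have h3 : ‖μ j * (∑ i : Fin n, (ℓt i : ℂ) * μ j ^ (i : ℕ))
            + ∑ i : Fin n, (ℓs i : ℂ) * μ j ^ (i : ℕ)‖
          ≤ ‖μ j‖ * ‖∑ i : Fin n, (ℓt i : ℂ) * μ j ^ (i : ℕ)‖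
            + ‖∑ i : Fin n, (ℓs i : ℂ) * μ j ^ (i : ℕ)‖ := by
        calc _ ≤ _ := norm_add_le _ _
        _ = _ := by rw [norm_mul]
      have h4 : ‖μ j‖ * ‖∑ i : Fin n, (ℓt i : ℂ) * μ j ^ (i : ℕ)‖
          ≤ ‖μ j‖ * σ j :=
        mul_le_mul_of_nonneg_left h1.le (norm_nonneg _)
      have h5 := hPV j hj
      nlinarith [norm_nonneg (μ j)]
  -- nesting of the spaces
  intro k
  rw [hW k, hW (k + 1)]
  apply Submodule.span_le.mpr
  rintro g ⟨t, ht, rfl⟩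
  have hexp : (fun x => f (lam ^ k * x - t))
      = ∑ j : Fin m, a j • fun x => f (lam ^ (k + 1) * x - (lam * t + τ j)) := by
    funext x
    rw [href (lam ^ k * x - t)]
    simp only [Finset.sum_apply, Pi.smul_apply, smul_eq_mul]
    refine Finset.sum_congr rfl fun j _ => ?_
    congr 1
    rw [zpow_add_one₀ (ne_of_gt hlampos)]
    ring
  rw [hexp]
  exact Submodule.sum_mem _ fun j _ => Submodule.smul_mem _ _
    (Submodule.subset_span ⟨lam * t + τ j, key t ht (τ j) (hτ j), rfl⟩)
end

section
/- Let λ be a PV number of degree n, V its Vandermonde matrix, and σ admissible. Then there exists M(σ) > 0 such that every open interval in ℝ of length M(σ) contains a point of the quasilattice 𝔏(σ); i.e., 𝔏(σ) is relatively dense in ℝ. -/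
open Polynomial

/-- Greedy digit expansion in base `lam` with digits bounded by `⌈lam⌉₊`. -/
lemma greedy_lemma (lam : ℝ) (hlam : 1 < lam) (N : ℕ) :
    ∀ x : ℝ, 0 ≤ x → x < lam ^ N →
    ∃ d : ℕ → ℕ, (∀ k, (d k : ℝ) ≤ (⌈lam⌉₊ : ℝ)) ∧
      x - 1 < ∑ k ∈ Finset.range N, (d k : ℝ) * lam ^ k ∧
      ∑ k ∈ Finset.range N, (d k : ℝ) * lam ^ k ≤ x := by
  induction N with
  | zero =>
    intro x hx hxlt
    refine ⟨fun _ => 0, by simp, ?_, ?_⟩ <;> simp at hxlt ⊢ <;> linarith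
  | succ N ih =>
    intro x hx hxlt
    have hlam0 : (0:ℝ) < lam := by linarith
    have hpow : (0:ℝ) < lam ^ N := pow_pos hlam0 N
    set D := ⌊x / lam ^ N⌋₊ with hDdef
    have hD1 : (D:ℝ) ≤ x / lam ^ N := Nat.floor_le (div_nonneg hx hpow.le)
    have hD2 : x / lam ^ N < D + 1 := Nat.lt_floor_add_one _
    have h1 : (D:ℝ) * lam ^ N ≤ x := by
      rw [le_div_iff₀ hpow] at hD1; exact hD1
    have h2 : x - (D:ℝ) * lam ^ N < lam ^ N := by
      rw [div_lt_iff₀ hpow] at hD2; nlinarith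
    have hDle : (D:ℝ) ≤ (⌈lam⌉₊ : ℝ) := by
      have hxd : x / lam ^ N < lam := by
        rw [div_lt_iff₀ hpow]
        calc x < lam ^ (N+1) := hxlt
          _ = lam * lam ^ N := by ring
      exact le_trans (le_of_lt (lt_of_le_of_lt hD1 hxd)) (Nat.le_ceil lam)
    obtain ⟨d, hd, hlow, hhigh⟩ := ih (x - (D:ℝ) * lam ^ N) (by linarith) h2
    refine ⟨Function.update d N D, ?_, ?_, ?_⟩
    · intro k
      rcases eq_or_ne k N with hk | hk
      · subst hk; rw [Function.update_self]; exact hDle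
      · simp [Function.update_of_ne hk, hd k]
    · rw [Finset.sum_range_succ]
      have hrw : ∑ k ∈ Finset.range N, ((Function.update d N D k : ℝ) * lam ^ k)
          = ∑ k ∈ Finset.range N, (d k : ℝ) * lam ^ k := by
        refine Finset.sum_congr rfl fun k hk => ?_
        rw [Function.update_of_ne (Finset.mem_range.mp hk).ne]
      rw [hrw, Function.update_self]
      linarith
    · rw [Finset.sum_range_succ]
      have hrw : ∑ k ∈ Finset.range N, ((Function.update d N D k : ℝ) * lam ^ k)
          = ∑ k ∈ Finset.range N, (d k : ℝ) * lam ^ k := by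
        refine Finset.sum_congr rfl fun k hk => ?_
        rw [Function.update_of_ne (Finset.mem_range.mp hk).ne]
      rw [hrw, Function.update_self]
      linarith

/-- The quasilattice `𝔏(σ)` is relatively dense in `ℝ`: there is `M(σ) > 0` such that
every open interval of length `M(σ)` contains a point of `𝔏(σ)`. -/
theorem stmt14 (lam : ℝ) (hlam : 1 < lam) (hint : IsIntegral ℤ lam)
    (n : ℕ) [NeZero n] (hn : (minpoly ℤ lam).natDegree = n)
    (μ : Fin n → ℂ)
    (hroots : Polynomial.map (algebraMap ℤ ℂ) (minpoly ℤ lam) = ∏ j, (X - C (μ j)))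
    (hμ0 : μ 0 = (lam : ℂ))
    (hPV : ∀ j : Fin n, j ≠ 0 → ‖μ j‖ < 1)
    (σ : Fin n → ℝ) (hσ : Admissible n μ σ) :
    ∃ M : ℝ, 0 < M ∧ ∀ x : ℝ, ∃ y ∈ QL n μ σ, y ∈ Set.Ioo x (x + M) := by
  classical
  have hlam0 : (0:ℝ) < lam := by linarith
  set p : ℤ[X] := minpoly ℤ lam with hpdef
  have hmonic : p.Monic := minpoly.monic hint
  have hp0 : p ≠ 0 := hmonic.ne_zero
  have hnpos : 0 < n := Nat.pos_of_ne_zero (NeZero.ne n)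
  -- each μ j kills p
  have hroot : ∀ j : Fin n, (aeval (μ j)) p = 0 := by
    intro j
    rw [aeval_def, ← eval_map, hroots]
    simp only [eval_prod, eval_sub, eval_X, eval_C]
    exact Finset.prod_eq_zero (Finset.mem_univ j) (sub_self _)
  set m0 : ℕ := ⌈lam⌉₊ with hm0def
  have hm0 : lam ≤ (m0:ℝ) := Nat.le_ceil lam
  have hm0pos : (0:ℝ) < (m0:ℝ) := lt_of_lt_of_le hlam0 hm0
  -- choose K so that the conjugate bounds come out small
  obtain ⟨K, hK⟩ : ∃ K : ℕ, ∀ j : Fin n, j ≠ 0 →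
      (m0:ℝ) * ‖μ j‖ ^ K * (1 / (1 - ‖μ j‖)) < σ j := by
    have hev : ∀ j : Fin n, ∀ᶠ K in Filter.atTop, (j ≠ 0 →
        (m0:ℝ) * ‖μ j‖ ^ K * (1 / (1 - ‖μ j‖)) < σ j) := by
      intro j
      by_cases hj : j = 0
      · filter_upwards with K hK0; exact absurd hj hK0
      · have hr1 : ‖μ j‖ < 1 := hPV j hj
        have hr0 : 0 ≤ ‖μ j‖ := norm_nonneg _
        have h1r : 0 < 1 - ‖μ j‖ := by linarith
        have hσj : 0 < σ j := hσ.2.1 j hj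
        have hc : 0 < σ j * (1 - ‖μ j‖) / (m0:ℝ) := by positivity
        have htend := tendsto_pow_atTop_nhds_zero_of_lt_one hr0 hr1
        filter_upwards [htend.eventually (gt_mem_nhds hc)] with K hKlt _
        rw [lt_div_iff₀ hm0pos] at hKlt
        rw [mul_one_div, div_lt_iff₀ h1r]
        nlinarith
    exact ((Filter.eventually_all).mpr hev).exists
  -- core membership lemma
  have hmem : ∀ (N : ℕ) (d : ℕ → ℕ), (∀ k, (d k : ℝ) ≤ (m0:ℝ)) →
      (∑ k ∈ Finset.range N, (d k : ℝ) * lam ^ (K + k)) ∈ QL n μ σ := by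
    intro N d hd
    set P : ℤ[X] := ∑ k ∈ Finset.range N, C (d k : ℤ) * X ^ (K + k) with hPdef
    have hPeval : ∀ z : ℂ, (aeval z) P = ∑ k ∈ Finset.range N, (d k : ℂ) * z ^ (K + k) := by
      intro z
      rw [hPdef, map_sum]
      refine Finset.sum_congr rfl fun k _ => ?_
      simp only [map_mul, aeval_C, map_pow, aeval_X, algebraMap_int_eq, eq_intCast, map_intCast]
      push_cast
      ring
    set r : ℤ[X] := P %ₘ p with hrdef
    have hrdeg : r.natDegree < n := by
      rcases eq_or_ne r 0 with h0 | h0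
      · rw [h0]; simpa using hnpos
      · have hdlt : r.degree < p.degree := degree_modByMonic_lt P hmonic
        rw [degree_eq_natDegree hp0] at hdlt
        rw [← hn]
        exact (natDegree_lt_iff_degree_lt h0).mpr (by exact_mod_cast hdlt)
    have hre : ∀ j : Fin n, (aeval (μ j)) r = (aeval (μ j)) P := by
      intro j
      conv_rhs => rw [← modByMonic_add_div P p]
      rw [map_add, map_mul, hroot j, zero_mul, add_zero]
    have hsum : ∀ j : Fin n, ∑ i : Fin n, ((r.coeff i : ℂ)) * μ j ^ (i:ℕ)
        = ∑ k ∈ Finset.range N, (d k : ℂ) * μ j ^ (K + k) := by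
      intro j
      rw [← hPeval (μ j), ← hre j, aeval_eq_sum_range' hrdeg (μ j),
        ← Fin.sum_univ_eq_sum_range (fun i => r.coeff i • μ j ^ i) n]
      refine Finset.sum_congr rfl fun i _ => ?_
      rw [zsmul_eq_mul]
    refine ⟨fun i => r.coeff i, ?_, ?_⟩
    · rw [hsum 0, hμ0]
      push_cast
      rfl
    · intro j hj
      rw [hsum j]
      set rj := ‖μ j‖ with hrjdef
      have hr1 : rj < 1 := hPV j hj
      have hr0 : 0 ≤ rj := norm_nonneg _
      have h1r : 0 < 1 - rj := by linarith
      calc ‖∑ k ∈ Finset.range N, (d k : ℂ) * μ j ^ (K + k)‖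
          ≤ ∑ k ∈ Finset.range N, ‖(d k : ℂ) * μ j ^ (K + k)‖ :=
            norm_sum_le _ _
        _ = ∑ k ∈ Finset.range N, (d k : ℝ) * rj ^ (K + k) := by
            refine Finset.sum_congr rfl fun k _ => ?_
            rw [norm_mul, norm_pow, Complex.norm_natCast]
        _ ≤ ∑ k ∈ Finset.range N, (m0:ℝ) * rj ^ (K + k) := by
            refine Finset.sum_le_sum fun k _ => ?_
            exact mul_le_mul_of_nonneg_right (hd k) (pow_nonneg hr0 _)
        _ = (m0:ℝ) * rj ^ K * ∑ k ∈ Finset.range N, rj ^ k := by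
            rw [Finset.mul_sum]
            refine Finset.sum_congr rfl fun k _ => ?_
            rw [pow_add]; ring
        _ ≤ (m0:ℝ) * rj ^ K * (1 / (1 - rj)) := by
            refine mul_le_mul_of_nonneg_left ?_ (by positivity)
            rw [le_div_iff₀ h1r]
            have hgs := geom_sum_mul rj N
            nlinarith [pow_nonneg hr0 N]
        _ < σ j := hK j hj
  have hpowK : (0:ℝ) < lam ^ K := pow_pos hlam0 K
  -- find a QL point in (w - lam^K, w] for every w ≥ 0
  have hpos : ∀ w : ℝ, 0 ≤ w → ∃ y ∈ QL n μ σ, w - lam ^ K < y ∧ y ≤ w := by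
    intro w hw
    obtain ⟨N, hN⟩ := pow_unbounded_of_one_lt (w / lam ^ K) hlam
    obtain ⟨d, hd, hlow, hhigh⟩ :=
      greedy_lemma lam hlam N (w / lam ^ K) (div_nonneg hw hpowK.le) hN
    have hfac : ∑ k ∈ Finset.range N, (d k : ℝ) * lam ^ (K + k)
        = lam ^ K * ∑ k ∈ Finset.range N, (d k : ℝ) * lam ^ k := by
      rw [Finset.mul_sum]
      refine Finset.sum_congr rfl fun k _ => ?_
      rw [pow_add]; ring
    rw [le_div_iff₀ hpowK] at hhigh
    have hlow2 : w < (∑ k ∈ Finset.range N, (d k : ℝ) * lam ^ k + 1) * lam ^ K :=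
      (div_lt_iff₀ hpowK).mp (by linarith)
    refine ⟨∑ k ∈ Finset.range N, (d k : ℝ) * lam ^ (K + k), hmem N d hd, ?_, ?_⟩ <;>
      rw [hfac] <;> nlinarith
  -- QL is closed under negation
  have hQLneg : ∀ y ∈ QL n μ σ, -y ∈ QL n μ σ := by
    rintro y ⟨ℓ, h1, h2⟩
    refine ⟨fun i => -ℓ i, ?_, ?_⟩
    · push_cast
      rw [show ∑ i : Fin n, -(ℓ i : ℂ) * μ 0 ^ (i:ℕ) = -∑ i : Fin n, (ℓ i : ℂ) * μ 0 ^ (i:ℕ)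
          by rw [← Finset.sum_neg_distrib]; exact Finset.sum_congr rfl fun i _ => by ring]
      rw [← h1]
    · intro j hj
      have : ∑ i : Fin n, (-(ℓ i) : ℂ) * μ j ^ (i:ℕ) = -∑ i : Fin n, (ℓ i : ℂ) * μ j ^ (i:ℕ) := by
        rw [← Finset.sum_neg_distrib]
        refine Finset.sum_congr rfl fun i _ => ?_
        push_cast; ring
      rw [show (fun i => -ℓ i) = fun i => -ℓ i from rfl]
      simpa [this] using h2 j hj
  refine ⟨2 * lam ^ K, by positivity, fun x => ?_⟩
  by_cases hx : -lam ^ K < x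
  · obtain ⟨y, hy, hy1, hy2⟩ := hpos (x + lam ^ K) (by linarith)
    exact ⟨y, hy, by constructor <;> nlinarith⟩
  · push_neg at hx
    obtain ⟨y, hy, hy1, hy2⟩ := hpos (-x - lam ^ K / 2) (by nlinarith)
    refine ⟨-y, hQLneg y hy, ?_, ?_⟩ <;> nlinarith
end
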